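/- arXiv:2404.04523 — 3 statements merged into one kernel-verified Lean document; each statement's English description precedes it below -/
import Mathlib

section
/- For every γ > 0 and every unidirectional Stokes wave solution (ψ, η, r) with R(s_c) < r < R(0), the depth at the trough satisfies d(s̄) < η̌ < d(0), where s̄ is the unique s > s_c with R(s̄) = R(0). -/
noncomputable section

open Real Set

/-- Partial derivative of `ψ` in the horizontal variable. -/
def px (ψ : ℝ → ℝ → ℝ) (x y : ℝ) : ℝ := deriv (fun t => ψ t y) x

/-- Partial derivative of `ψ` in the vertical variable. -/
def py (ψ : ℝ → ℝ → ℝ) (x y : ℝ) : ℝ := deriv (fun t => ψ x t) y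

/-- Second partial derivative in `x`. -/
def pxx (ψ : ℝ → ℝ → ℝ) (x y : ℝ) : ℝ := deriv (fun t => px ψ t y) x

/-- Second partial derivative in `y`. -/
def pyy (ψ : ℝ → ℝ → ℝ) (x y : ℝ) : ℝ := deriv (fun t => py ψ x t) y

/-- Depth `d(s)` of the laminar (stream) flow with surface value `s` of `ψ_y`. -/
def lamDepth (γ s : ℝ) : ℝ := (-s + Real.sqrt (s ^ 2 + 2 * γ)) / γ

/-- Bernoulli constant `R(s) = ½ s² + γ + d(s)` of the laminar flow. -/
def bernR (γ s : ℝ) : ℝ := s ^ 2 / 2 + γ + lamDepth γ s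

/-- `s` is the (unique) positive critical point `s_c` of `R`, characterized by the
equation `s - 1/γ + s/(γ √(s² + 2γ)) = 0`. -/
def IsCrit (γ s : ℝ) : Prop :=
  0 < s ∧ s - 1 / γ + s / (γ * Real.sqrt (s ^ 2 + 2 * γ)) = 0

/-- A solution `(ψ, η, r)` of the stream-function formulation with constant adverse
vorticity `ω = -γ`:  `Δψ = γ` in the fluid domain `D_η`, the Bernoulli condition on the
surface, `ψ = 1` on the surface and `ψ = 0` on the flat bottom. -/
structure StreamSolution (γ : ℝ) (ψ : ℝ → ℝ → ℝ) (η : ℝ → ℝ) (r : ℝ) : Prop where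
  eta_smooth : ContDiff ℝ (⊤ : ℕ∞) η
  eta_pos : ∀ x, 0 < η x
  psi_smooth : ContDiff ℝ (⊤ : ℕ∞) (fun p : ℝ × ℝ => ψ p.1 p.2)
  laplace : ∀ x y, 0 < y → y < η x → pxx ψ x y + pyy ψ x y = γ
  bernoulli : ∀ x, (px ψ x (η x)) ^ 2 / 2 + (py ψ x (η x)) ^ 2 / 2 + η x = r
  surface_val : ∀ x, ψ x (η x) = 1
  bottom_val : ∀ x, ψ x 0 = 0

/-- The flow is unidirectional: `ψ_y > 0` everywhere in the fluid domain `D_η`. -/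
def Unidirectional (ψ : ℝ → ℝ → ℝ) (η : ℝ → ℝ) : Prop :=
  ∀ x y, 0 < y → y < η x → 0 < py ψ x y

/-- A Stokes wave with half-period `Λ`: the solution is `2Λ`-periodic and even in `x`,
and the surface profile is strictly decreasing from the crest (`x = 0`) to the
trough (`x = Λ`).  Thus `η̂ = max η = η 0` and `η̌ = min η = η Λ`. -/
structure StokesWave (γ : ℝ) (ψ : ℝ → ℝ → ℝ) (η : ℝ → ℝ) (r Λ : ℝ) : Prop where
  sol : StreamSolution γ ψ η r
  lam_pos : 0 < Λ
  eta_periodic : ∀ x, η (x + 2 * Λ) = η x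
  eta_even : ∀ x, η (-x) = η x
  psi_periodic : ∀ x y, ψ (x + 2 * Λ) y = ψ x y
  psi_even : ∀ x y, ψ (-x) y = ψ x y
  eta_anti : StrictAntiOn η (Set.Icc 0 Λ)

/-- A solitary wave (relative to the critical value `sc = s_c` of `γ`): the solution is
even in `x`, the profile is strictly decreasing on `(0, ∞)` and non-constant, and the
flow converges to a supercritical laminar flow `(U(·; s), d(s))` with `s > s_c`,
`R(s) = r` as `|x| → ∞`.  The crest is at `x = 0`, `η̂ = η 0` and `η̌ = inf η = d(s)`. -/
structure SolitaryWave (γ sc : ℝ) (ψ : ℝ → ℝ → ℝ) (η : ℝ → ℝ) (r : ℝ) : Prop where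
  sol : StreamSolution γ ψ η r
  eta_even : ∀ x, η (-x) = η x
  psi_even : ∀ x y, ψ (-x) y = ψ x y
  eta_anti : StrictAntiOn η (Set.Ioi 0)
  nonconst : ∃ x₁ x₂, η x₁ ≠ η x₂
  asymptotic : ∃ s, sc < s ∧ bernR γ s = r ∧
    ∀ ε > 0, ∃ X : ℝ, ∀ x : ℝ, X ≤ |x| →
      |η x - lamDepth γ s| ≤ ε ∧
      ∀ y ∈ Set.Icc 0 (η x), |px ψ x y| + |py ψ x y - (γ * y + s)| ≤ ε

section Helpers

def D1 (f : ℝ × ℝ → ℝ) : ℝ × ℝ → ℝ := fun p => fderiv ℝ f p (1, 0)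
def D2 (f : ℝ × ℝ → ℝ) : ℝ × ℝ → ℝ := fun p => fderiv ℝ f p (0, 1)

variable {f : ℝ × ℝ → ℝ}

lemma ContDiffTop.d1 (hf : ContDiff ℝ (⊤ : ℕ∞) f) : ContDiff ℝ (⊤ : ℕ∞) (D1 f) :=
  (hf.fderiv_right (by simp)).clm_apply contDiff_const

lemma ContDiffTop.d2 (hf : ContDiff ℝ (⊤ : ℕ∞) f) : ContDiff ℝ (⊤ : ℕ∞) (D2 f) :=
  (hf.fderiv_right (by simp)).clm_apply contDiff_const

lemma hasDerivAt_sec1 (hf : ContDiff ℝ (⊤ : ℕ∞) f) (x y : ℝ) :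
    HasDerivAt (fun t => f (t, y)) (D1 f (x, y)) x := by
  have h1 : HasDerivAt (fun t : ℝ => ((t, y) : ℝ × ℝ)) (1, 0) x :=
    (hasDerivAt_id x).prodMk (hasDerivAt_const x y)
  exact ((hf.differentiable (by simp) (x, y)).hasFDerivAt).comp_hasDerivAt x h1

lemma hasDerivAt_sec2 (hf : ContDiff ℝ (⊤ : ℕ∞) f) (x y : ℝ) :
    HasDerivAt (fun t => f (x, t)) (D2 f (x, y)) y := by
  have h1 : HasDerivAt (fun t : ℝ => ((x, t) : ℝ × ℝ)) (0, 1) y :=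
    (hasDerivAt_const y x).prodMk (hasDerivAt_id y)
  exact ((hf.differentiable (by simp) (x, y)).hasFDerivAt).comp_hasDerivAt y h1

lemma D1_D2_comm (hf : ContDiff ℝ (⊤ : ℕ∞) f) (p : ℝ × ℝ) : D1 (D2 f) p = D2 (D1 f) p := by
  have hdf : ContDiff ℝ (⊤ : ℕ∞) (fderiv ℝ f) := hf.fderiv_right (by simp)
  have h2 : HasFDerivAt (fderiv ℝ f) (fderiv ℝ (fderiv ℝ f) p) p :=
    (hdf.differentiable (by simp) p).hasFDerivAt
  have hsym := second_derivative_symmetric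
    (fun y => (hf.differentiable (by simp) y).hasFDerivAt) h2
  have e1 : HasFDerivAt (D2 f)
      (((fderiv ℝ f p).comp 0) + (fderiv ℝ (fderiv ℝ f) p).flip ((0:ℝ), (1:ℝ))) p :=
    h2.clm_apply (hasFDerivAt_const _ _)
  have e2 : HasFDerivAt (D1 f)
      (((fderiv ℝ f p).comp 0) + (fderiv ℝ (fderiv ℝ f) p).flip ((1:ℝ), (0:ℝ))) p :=
    h2.clm_apply (hasFDerivAt_const _ _)
  have v1 : D1 (D2 f) p = fderiv ℝ (D2 f) p (1, 0) := rfl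
  have v2 : D2 (D1 f) p = fderiv ℝ (D1 f) p (0, 1) := rfl
  rw [v1, v2, e1.fderiv, e2.fderiv]
  simp [hsym (1,0) (0,1)]


variable {ψ : ℝ → ℝ → ℝ}

lemma px_eq (hψ : ContDiff ℝ (⊤ : ℕ∞) (fun p : ℝ × ℝ => ψ p.1 p.2)) (x y : ℝ) :
    px ψ x y = D1 (fun p : ℝ × ℝ => ψ p.1 p.2) (x, y) :=
  (hasDerivAt_sec1 hψ x y).deriv

lemma py_eq (hψ : ContDiff ℝ (⊤ : ℕ∞) (fun p : ℝ × ℝ => ψ p.1 p.2)) (x y : ℝ) :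
    py ψ x y = D2 (fun p : ℝ × ℝ => ψ p.1 p.2) (x, y) :=
  (hasDerivAt_sec2 hψ x y).deriv

lemma pxx_eq (hψ : ContDiff ℝ (⊤ : ℕ∞) (fun p : ℝ × ℝ => ψ p.1 p.2)) (x y : ℝ) :
    pxx ψ x y = D1 (D1 (fun p : ℝ × ℝ => ψ p.1 p.2)) (x, y) := by
  have : (fun t => px ψ t y) = fun t => D1 (fun p : ℝ × ℝ => ψ p.1 p.2) (t, y) := by
    funext t; exact px_eq hψ t y
  rw [pxx, this]
  exact (hasDerivAt_sec1 (ContDiffTop.d1 hψ) x y).deriv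

lemma pyy_eq (hψ : ContDiff ℝ (⊤ : ℕ∞) (fun p : ℝ × ℝ => ψ p.1 p.2)) (x y : ℝ) :
    pyy ψ x y = D2 (D2 (fun p : ℝ × ℝ => ψ p.1 p.2)) (x, y) := by
  have : (fun t => py ψ x t) = fun t => D2 (fun p : ℝ × ℝ => ψ p.1 p.2) (x, t) := by
    funext t; exact py_eq hψ x t
  rw [pyy, this]
  exact (hasDerivAt_sec2 (ContDiffTop.d2 hψ) x y).deriv

/-- derivative vanishes at a point of even symmetry -/
lemma deriv_zero_of_symm {g : ℝ → ℝ} {a : ℝ} (hg : Differentiable ℝ g)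
    (hsymm : ∀ t, g (2 * a - t) = g t) : deriv g a = 0 := by
  have h0 : HasDerivAt g (deriv g a) (2 * a - a) := by
    rw [show 2 * a - a = a by ring]; exact (hg a).hasDerivAt
  have h1 : HasDerivAt (fun t => g (2 * a - t)) (deriv g a * (0 - 1)) a :=
    h0.comp a (((hasDerivAt_const a (2*a)).sub (hasDerivAt_id a)))
  have h2 : (fun t => g (2 * a - t)) = g := funext hsymm
  rw [h2] at h1
  have := h1.deriv
  have h3 := (hg a).hasDerivAt.deriv
  nlinarith [h1.deriv]

/-- at a minimum approachable from the left, the derivative is ≤ 0 -/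
lemma deriv_nonpos_of_min_left {g : ℝ → ℝ} {a b c : ℝ} (hg : HasDerivAt g c b)
    (hab : a < b) (hmin : ∀ t, t ∈ Set.Ico a b → g b ≤ g t) : c ≤ 0 := by
  have ht : Filter.Tendsto (slope g b) (nhdsWithin b (Set.Iio b)) (nhds c) :=
    (hasDerivAt_iff_tendsto_slope.1 hg).mono_left
      (nhdsWithin_mono b (fun t ht => ne_of_lt ht))
  refine le_of_tendsto ht ?_
  filter_upwards [Ioo_mem_nhdsLT_of_mem (⟨hab, le_refl b⟩ : b ∈ Set.Ioc a b)] with t ht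
  have h1 : g b ≤ g t := hmin t ⟨le_of_lt ht.1, ht.2⟩
  have h2 : t - b < 0 := by linarith [ht.2]
  rw [slope_def_field]
  exact div_nonpos_of_nonneg_of_nonpos (by linarith) (le_of_lt h2)

/-- if g t ≤ g b for t to the right of b, the derivative at b is ≤ 0 -/
lemma deriv_nonpos_of_le_right {g : ℝ → ℝ} {b d c : ℝ} (hg : HasDerivAt g c b)
    (hbd : b < d) (hle : ∀ t, t ∈ Set.Ioc b d → g t ≤ g b) : c ≤ 0 := by
  have ht : Filter.Tendsto (slope g b) (nhdsWithin b (Set.Ioi b)) (nhds c) :=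
    (hasDerivAt_iff_tendsto_slope.1 hg).mono_left
      (nhdsWithin_mono b (fun t ht => ne_of_gt ht))
  refine le_of_tendsto ht ?_
  filter_upwards [Ioo_mem_nhdsGT_of_mem (⟨le_refl b, hbd⟩ : b ∈ Set.Ico b d)] with t ht
  have h1 : g t ≤ g b := hle t ⟨ht.1, le_of_lt ht.2⟩
  have h2 : (0:ℝ) < t - b := by linarith [ht.1]
  rw [slope_def_field]
  exact div_nonpos_of_nonpos_of_nonneg (by linarith) (le_of_lt h2)


/-- second derivative test: at a local min of a smooth function the second deriv is ≥ 0 -/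
lemma second_deriv_nonneg_at_localmin {g : ℝ → ℝ} (hg : ContDiff ℝ (⊤ : ℕ∞) g) {a : ℝ}
    (h : IsLocalMin g a) : 0 ≤ deriv (deriv g) a := by
  by_contra hc
  push_neg at hc
  have derivCD : ∀ G : ℝ → ℝ, ContDiff ℝ (⊤ : ℕ∞) G → ContDiff ℝ (⊤ : ℕ∞) (deriv G) := by
    intro G hG
    have e : deriv G = fun x => fderiv ℝ G x 1 := funext fun x => fderiv_apply_one_eq_deriv.symm
    rw [e]
    exact (hG.fderiv_right (by simp)).clm_apply contDiff_const
  have hg' : ContDiff ℝ (⊤ : ℕ∞) (deriv g) := derivCD g hg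
  have hda : deriv g a = 0 := h.deriv_eq_zero
  have hcont : Continuous (deriv (deriv g)) := (derivCD _ hg').continuous
  obtain ⟨δ, hδ, hball⟩ : ∃ δ > 0, ∀ t ∈ Set.Icc a (a + δ), deriv (deriv g) t < 0 := by
    have := hcont.continuousAt (x := a)
    have hmem : Set.Iio (0:ℝ) ∈ nhds (deriv (deriv g) a) := Iio_mem_nhds hc
    obtain ⟨ε, hε, hb⟩ := Metric.mem_nhds_iff.1 (this hmem)
    refine ⟨ε/2, by linarith, fun t ht => ?_⟩
    have : t ∈ Metric.ball a ε := by
      simp only [Metric.mem_ball, Real.dist_eq, abs_sub_lt_iff]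
      constructor <;> [skip; skip] <;> cases' ht with h1 h2 <;> linarith
    exact hb this
  have hanti : StrictAntiOn (deriv g) (Set.Icc a (a + δ)) := by
    refine strictAntiOn_of_deriv_neg (convex_Icc _ _) (hg'.continuous.continuousOn) ?_
    intro t ht
    rw [interior_Icc] at ht
    exact hball t ⟨le_of_lt ht.1, le_of_lt ht.2⟩
  have hneg : ∀ t ∈ Set.Ioo a (a + δ), deriv g t < 0 := by
    intro t ht
    have := hanti ⟨le_refl a, by linarith⟩ ⟨le_of_lt ht.1, le_of_lt ht.2⟩ ht.1
    rwa [hda] at this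
  have hganti : StrictAntiOn g (Set.Icc a (a + δ)) := by
    refine strictAntiOn_of_deriv_neg (convex_Icc _ _) (hg.continuous.continuousOn) ?_
    intro t ht; rw [interior_Icc] at ht; exact hneg t ht
  have h2 : ∀ᶠ t in nhdsWithin a (Set.Ioi a), g a ≤ g t :=
    (h.filter_mono nhdsWithin_le_nhds : _)
  have h3 : ∀ᶠ t in nhdsWithin a (Set.Ioi a), t ∈ Set.Ioo a (a + δ) :=
    Ioo_mem_nhdsGT_of_mem ⟨le_refl a, by linarith⟩
  obtain ⟨t, ht1, ht2⟩ := (h2.and h3).exists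
  have := hganti ⟨le_refl a, by linarith⟩ ⟨le_of_lt ht2.1, le_of_lt ht2.2⟩ ht2.1
  linarith

/-- weak minimum principle for functions harmonic on an open subset of a compact set -/
lemma weak_min_principle {w : ℝ × ℝ → ℝ} (hw : ContDiff ℝ (⊤ : ℕ∞) w) {K U : Set (ℝ × ℝ)}
    (hK : IsCompact K) (hU : IsOpen U) (hUK : U ⊆ K)
    (hlap : ∀ p ∈ U, D1 (D1 w) p + D2 (D2 w) p = 0)
    (hbd : ∀ p ∈ K \ U, 0 ≤ w p) : ∀ p ∈ K, 0 ≤ w p := by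
  intro q hq
  have hne : K.Nonempty := ⟨q, hq⟩
  -- bound on the second coordinate squared
  obtain ⟨pB, _, hpB⟩ := hK.exists_isMaxOn hne
    ((continuous_snd.pow 2).continuousOn : ContinuousOn (fun p : ℝ × ℝ => p.2 ^ 2) K)
  set B : ℝ := pB.2 ^ 2 with hBdef
  have hB0 : 0 ≤ B := sq_nonneg _
  have key : ∀ ε : ℝ, 0 < ε → -(ε * B) ≤ w q := by
    intro ε hε
    set v : ℝ × ℝ → ℝ := fun p => w p - ε * p.2 ^ 2 with hv
    have hvc : Continuous v := hw.continuous.sub (continuous_const.mul (continuous_snd.pow 2))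
    obtain ⟨p0, hp0K, hp0min⟩ := hK.exists_isMinOn hne hvc.continuousOn
    have hp0U : p0 ∉ U := by
      intro hp0U
      -- local min of v at p0
      have hlocal : IsLocalMin v p0 := by
        filter_upwards [hU.mem_nhds hp0U] with p hp
        exact hp0min (hUK hp)
      -- slice in the first coordinate
      set g1 : ℝ → ℝ := fun t => v (t, p0.2) with hg1
      have hg1c : ContDiff ℝ (⊤ : ℕ∞) g1 :=
        (hw.sub (contDiff_const.mul (contDiff_snd.pow 2))).comp
          (contDiff_id.prodMk contDiff_const)
      have hg1min : IsLocalMin g1 p0.1 := by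
        have : IsLocalMin (v ∘ fun t : ℝ => (t, p0.2)) p0.1 := by
          refine IsLocalMin.comp_continuous ?_ (by fun_prop)
          simpa using hlocal
        exact this
      have hd1 : ∀ t, HasDerivAt g1 (D1 w (t, p0.2)) t := by
        intro t
        have h1 := hasDerivAt_sec1 hw t p0.2
        have h2 : HasDerivAt (fun _ : ℝ => ε * p0.2 ^ 2) 0 t := hasDerivAt_const _ _
        have h3 := h1.sub h2
        rw [sub_zero] at h3
        exact h3
      have hdd1 : deriv (deriv g1) p0.1 = D1 (D1 w) p0 := by
        have e1 : deriv g1 = fun t => D1 w (t, p0.2) := funext fun t => (hd1 t).deriv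
        rw [e1]
        simpa using (hasDerivAt_sec1 (ContDiffTop.d1 hw) p0.1 p0.2).deriv
      have hA : 0 ≤ D1 (D1 w) p0 := hdd1 ▸ second_deriv_nonneg_at_localmin hg1c hg1min
      -- slice in the second coordinate
      set g2 : ℝ → ℝ := fun t => v (p0.1, t) with hg2
      have hg2c : ContDiff ℝ (⊤ : ℕ∞) g2 :=
        (hw.sub (contDiff_const.mul (contDiff_snd.pow 2))).comp
          (contDiff_const.prodMk contDiff_id)
      have hg2min : IsLocalMin g2 p0.2 := by
        have : IsLocalMin (v ∘ fun t : ℝ => (p0.1, t)) p0.2 := by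
          refine IsLocalMin.comp_continuous ?_ (by fun_prop)
          simpa using hlocal
        exact this
      have hd2 : ∀ t, HasDerivAt g2 (D2 w (p0.1, t) - ε * (2 * t)) t := by
        intro t
        have h1 := hasDerivAt_sec2 hw p0.1 t
        have h2 : HasDerivAt (fun s : ℝ => ε * s ^ 2) (ε * (2 * t)) t := by
          simpa using (hasDerivAt_pow 2 t).const_mul ε
        exact h1.sub h2
      have hdd2 : deriv (deriv g2) p0.2 = D2 (D2 w) p0 - 2 * ε := by
        have e1 : deriv g2 = fun t => D2 w (p0.1, t) - ε * (2 * t) :=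
          funext fun t => (hd2 t).deriv
        rw [e1]
        have h3 : HasDerivAt (fun t => D2 w (p0.1, t) - ε * (2 * t))
            (D2 (D2 w) (p0.1, p0.2) - ε * 2) p0.2 := by
          have h4 := hasDerivAt_sec2 (ContDiffTop.d2 hw) p0.1 p0.2
          have h5 : HasDerivAt (fun t : ℝ => ε * (2 * t)) (ε * 2) p0.2 := by
            simpa using ((hasDerivAt_id p0.2).const_mul 2).const_mul ε
          exact h4.sub h5
        rw [h3.deriv]; ring
      have hBb : 0 ≤ D2 (D2 w) p0 - 2 * ε := hdd2 ▸ second_deriv_nonneg_at_localmin hg2c hg2min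
      have := hlap p0 hp0U
      linarith
    have h1 : 0 ≤ w p0 := hbd p0 ⟨hp0K, hp0U⟩
    have h2 : v p0 ≤ v q := hp0min hq
    have h3 : -(ε * B) ≤ v p0 := by
      have : p0.2 ^ 2 ≤ B := hpB hp0K
      have := mul_le_mul_of_nonneg_left this (le_of_lt hε)
      simp only [hv]
      linarith
    have h4 : v q ≤ w q := by
      have : 0 ≤ ε * q.2 ^ 2 := mul_nonneg (le_of_lt hε) (sq_nonneg _)
      simp only [hv]; linarith
    linarith
  by_contra hneg
  push_neg at hneg
  have := key (-w q / (2 * (B + 1))) (div_pos (by linarith) (by linarith))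
  have hB1 : (-w q / (2 * (B + 1))) * B < -w q := by
    rw [div_mul_eq_mul_div, div_lt_iff₀ (by linarith)]
    nlinarith
  linarith


variable {γ : ℝ}

lemma sq2γ_pos (hγ : 0 < γ) (s : ℝ) : 0 < s ^ 2 + 2 * γ := by positivity

lemma sqrt_sq2γ_pos (hγ : 0 < γ) (s : ℝ) : 0 < Real.sqrt (s ^ 2 + 2 * γ) :=
  Real.sqrt_pos.2 (sq2γ_pos hγ s)

lemma sqrt_sq2γ_sq (hγ : 0 < γ) (s : ℝ) :
    (Real.sqrt (s ^ 2 + 2 * γ)) ^ 2 = s ^ 2 + 2 * γ :=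
  Real.sq_sqrt (le_of_lt (sq2γ_pos hγ s))

lemma sqrt_gt (hγ : 0 < γ) (s : ℝ) : s < Real.sqrt (s ^ 2 + 2 * γ) := by
  rcases le_or_gt s 0 with h | h
  · exact lt_of_le_of_lt h (sqrt_sq2γ_pos hγ s)
  · nlinarith [sqrt_sq2γ_sq hγ s, sqrt_sq2γ_pos hγ s]

lemma lamDepth_pos (hγ : 0 < γ) (s : ℝ) : 0 < lamDepth γ s :=
  div_pos (by linarith [sqrt_gt hγ s]) hγ

lemma lamDepth_identity (hγ : 0 < γ) (s : ℝ) :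
    γ * (lamDepth γ s) ^ 2 / 2 + s * lamDepth γ s = 1 := by
  have h1 := sqrt_sq2γ_sq hγ s
  rw [lamDepth]
  field_simp
  have h1' : Real.sqrt (s ^ 2 + γ * 2) ^ 2 = s ^ 2 + γ * 2 := by rw [mul_comm γ 2]; exact h1
  nlinarith [h1, h1']

/-- the bottom velocity of the laminar flow of depth `h` -/
def aFun (γ h : ℝ) : ℝ := 1 / h - γ * h / 2

lemma lamDepth_aFun (hγ : 0 < γ) {h : ℝ} (hh : 0 < h) : lamDepth γ (aFun γ h) = h := by
  have key : Real.sqrt ((aFun γ h) ^ 2 + 2 * γ) = aFun γ h + γ * h := by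
    have h2 : (aFun γ h + γ * h) ^ 2 = (aFun γ h) ^ 2 + 2 * γ := by
      rw [aFun]; field_simp; ring
    have h1 : 0 ≤ aFun γ h + γ * h := by
      rw [aFun]
      have : 0 < 1/h := by positivity
      nlinarith
    rw [← h2]
    exact Real.sqrt_sq h1
  rw [lamDepth, key]
  field_simp
  ring

lemma aFun_lamDepth (hγ : 0 < γ) (s : ℝ) : aFun γ (lamDepth γ s) = s := by
  have h1 := lamDepth_identity hγ s
  have h2 := lamDepth_pos hγ s
  rw [aFun]
  field_simp
  nlinarith

lemma aFun_strictAnti (hγ : 0 < γ) : StrictAntiOn (aFun γ) (Set.Ioi 0) := by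
  intro h1 h1m h2 h2m hlt
  simp only [Set.mem_Ioi] at h1m h2m
  rw [aFun, aFun]
  have : 1 / h2 < 1 / h1 := by
    rw [div_lt_div_iff₀ (by linarith) (by linarith)]; linarith
  nlinarith

lemma bernR_aFun (hγ : 0 < γ) {h : ℝ} (hh : 0 < h) :
    bernR γ (aFun γ h) = (aFun γ h + γ * h) ^ 2 / 2 + h := by
  rw [bernR, lamDepth_aFun hγ hh]
  have : aFun γ h * h = 1 - γ * h ^ 2 / 2 := by rw [aFun]; field_simp
  nlinarith [this]

/-- the derivative of `bernR γ` -/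
def gFun (γ s : ℝ) : ℝ := s - 1 / γ + s / (γ * Real.sqrt (s ^ 2 + 2 * γ))

lemma hasDerivAt_bernR (hγ : 0 < γ) (s : ℝ) : HasDerivAt (bernR γ) (gFun γ s) s := by
  have hsq := sqrt_sq2γ_pos hγ s
  have hssq := sqrt_sq2γ_sq hγ s
  have h1 : HasDerivAt (fun t : ℝ => t ^ 2 + 2 * γ) (2 * s) s := by
    simpa using ((hasDerivAt_pow 2 s).add_const (2 * γ))
  have h2 : HasDerivAt (fun t : ℝ => Real.sqrt (t ^ 2 + 2 * γ))
      (1 / (2 * Real.sqrt (s ^ 2 + 2 * γ)) * (2 * s)) s :=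
    (Real.hasDerivAt_sqrt (ne_of_gt (sq2γ_pos hγ s))).comp s h1
  have h3 : HasDerivAt (fun t : ℝ => (-t + Real.sqrt (t ^ 2 + 2 * γ)) / γ)
      ((-1 + 1 / (2 * Real.sqrt (s ^ 2 + 2 * γ)) * (2 * s)) / γ) s :=
    (((hasDerivAt_id s).neg).add h2).div_const γ
  have h4 : HasDerivAt (fun t : ℝ => t ^ 2 / 2 + γ + lamDepth γ t)
      (((2:ℕ) * s ^ (2-1) / 2) + (-1 + 1 / (2 * Real.sqrt (s ^ 2 + 2 * γ)) * (2 * s)) / γ) s :=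
    (((hasDerivAt_pow 2 s).div_const 2).add_const γ).add (show HasDerivAt (fun t => lamDepth γ t) _ s from h3)
  have heq : (((2:ℕ) * s ^ (2-1) / 2) + (-1 + 1 / (2 * Real.sqrt (s ^ 2 + 2 * γ)) * (2 * s)) / γ)
      = gFun γ s := by
    rw [gFun]; field_simp; ring
  rw [← heq]
  exact h4

lemma gFun_strictMono (hγ : 0 < γ) : StrictMono (gFun γ) := by
  have hm : StrictMono (fun s : ℝ => s / Real.sqrt (s ^ 2 + 2 * γ)) := by
    apply strictMono_of_deriv_pos
    intro s
    have hsq := sqrt_sq2γ_pos hγ s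
    have hssq := sqrt_sq2γ_sq hγ s
    have h1 : HasDerivAt (fun t : ℝ => t ^ 2 + 2 * γ) (2 * s) s := by
      simpa using ((hasDerivAt_pow 2 s).add_const (2 * γ))
    have h2 : HasDerivAt (fun t : ℝ => Real.sqrt (t ^ 2 + 2 * γ))
        (1 / (2 * Real.sqrt (s ^ 2 + 2 * γ)) * (2 * s)) s :=
      (Real.hasDerivAt_sqrt (ne_of_gt (sq2γ_pos hγ s))).comp s h1
    have h3 : HasDerivAt (fun t : ℝ => t / Real.sqrt (t ^ 2 + 2 * γ))
        ((1 * Real.sqrt (s ^ 2 + 2 * γ) - s * (1 / (2 * Real.sqrt (s ^ 2 + 2 * γ)) * (2 * s)))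
          / (Real.sqrt (s ^ 2 + 2 * γ)) ^ 2) s :=
      (hasDerivAt_id s).div h2 (ne_of_gt hsq)
    rw [h3.deriv]
    rw [hssq]
    apply div_pos _ (sq2γ_pos hγ s)
    have : s * (1 / (2 * Real.sqrt (s ^ 2 + 2 * γ)) * (2 * s))
        = s ^ 2 / Real.sqrt (s ^ 2 + 2 * γ) := by field_simp
    rw [this, one_mul]
    rw [sub_pos, div_lt_iff₀ hsq]
    nlinarith
  intro s1 s2 h12
  have h1 := hm h12
  simp only [gFun]
  have e : ∀ s : ℝ, s / (γ * Real.sqrt (s ^ 2 + 2 * γ))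
      = (1 / γ) * (s / Real.sqrt (s ^ 2 + 2 * γ)) := by
    intro s; field_simp
  rw [e s1, e s2]
  have h2 := mul_lt_mul_of_pos_left h1 (show (0:ℝ) < 1/γ by positivity)
  linarith

lemma bernR_strictMonoOn (hγ : 0 < γ) {sc : ℝ} (hcrit : gFun γ sc = 0) :
    StrictMonoOn (bernR γ) (Set.Ici sc) := by
  have hdiff : Differentiable ℝ (bernR γ) := fun s => (hasDerivAt_bernR hγ s).differentiableAt
  apply strictMonoOn_of_deriv_pos (convex_Ici sc) hdiff.continuous.continuousOn
  intro s hs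
  rw [interior_Ici] at hs
  rw [(hasDerivAt_bernR hγ s).deriv, ← hcrit]
  exact gFun_strictMono hγ hs

lemma bernR_strictAntiOn (hγ : 0 < γ) : StrictAntiOn (bernR γ) (Set.Iic 0) := by
  have hdiff : Differentiable ℝ (bernR γ) := fun s => (hasDerivAt_bernR hγ s).differentiableAt
  apply strictAntiOn_of_deriv_neg (convex_Iic 0) hdiff.continuous.continuousOn
  intro s hs
  rw [interior_Iic] at hs
  rw [(hasDerivAt_bernR hγ s).deriv, gFun]
  have h1 : s / (γ * Real.sqrt (s ^ 2 + 2 * γ)) ≤ 0 := by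
    apply div_nonpos_of_nonpos_of_nonneg (le_of_lt hs)
    positivity
  have h2 : 0 < 1 / γ := by positivity
  have hs' : s < 0 := hs
  linarith


end Helpers

/-- Proposition 2.2, first part: for every unidirectional Stokes wave with
`R(s_c) < r < R(0)` the trough depth satisfies `d(s̄) < η̌ < d(0)`, where `s̄ = s₊(R(0))`
is the unique `s > s_c` with `R(s̄) = R(0)`. -/
theorem trough_depth_bounds :
    ∀ γ > (0 : ℝ),
      ∀ (ψ : ℝ → ℝ → ℝ) (η : ℝ → ℝ) (r Λ sc : ℝ),
        StokesWave γ ψ η r Λ → Unidirectional ψ η → IsCrit γ sc →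
        bernR γ sc < r → r < bernR γ 0 →
        ∀ sbar : ℝ, sc < sbar → bernR γ sbar = bernR γ 0 →
          lamDepth γ sbar < η Λ ∧ η Λ < lamDepth γ 0 := by
  intro γ hγ ψ η r Λ sc hW hu hcrit hr1 hr2 sbar hsbar1 hsbar2
  have hsol := hW.sol
  set F : ℝ × ℝ → ℝ := fun p => ψ p.1 p.2 with hFdef
  have hF : ContDiff ℝ (⊤ : ℕ∞) F := hsol.psi_smooth
  have hη : ContDiff ℝ (⊤ : ℕ∞) η := hsol.eta_smooth
  have hΛ : 0 < Λ := hW.lam_pos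
  have hηdiff : Differentiable ℝ η := hη.differentiable (by simp)
  have hDF1 : ContDiff ℝ (⊤ : ℕ∞) (D1 F) := ContDiffTop.d1 hF
  have hDF2 : ContDiff ℝ (⊤ : ℕ∞) (D2 F) := ContDiffTop.d2 hF
  -- symmetry about the trough line x = Λ
  have hψsymm : ∀ t y, ψ (2 * Λ - t) y = ψ t y := by
    intro t y
    have h2 := hW.psi_periodic (t - 2 * Λ) y
    rw [show t - 2 * Λ + 2 * Λ = t by ring] at h2
    rw [show 2 * Λ - t = -(t - 2 * Λ) by ring, hW.psi_even, h2]
  have hηsymm : ∀ t, η (2 * Λ - t) = η t := by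
    intro t
    have h2 := hW.eta_periodic (t - 2 * Λ)
    rw [show t - 2 * Λ + 2 * Λ = t by ring] at h2
    rw [show 2 * Λ - t = -(t - 2 * Λ) by ring, hW.eta_even, h2]
  have hpxΛ : ∀ y, px ψ Λ y = 0 := fun y =>
    deriv_zero_of_symm (fun t => (hasDerivAt_sec1 hF t y).differentiableAt)
      (fun t => hψsymm t y)
  have hpx0 : ∀ y, px ψ 0 y = 0 := fun y =>
    deriv_zero_of_symm (fun t => (hasDerivAt_sec1 hF t y).differentiableAt)
      (fun t => by rw [show 2 * (0:ℝ) - t = -t by ring]; exact hW.psi_even t y)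
  have hηderivΛ : deriv η Λ = 0 := deriv_zero_of_symm hηdiff hηsymm
  have hηderiv0 : deriv η 0 = 0 :=
    deriv_zero_of_symm hηdiff
      (fun t => by rw [show 2 * (0:ℝ) - t = -t by ring]; exact hW.eta_even t)
  -- the surface slope is nonpositive on [0, Λ]
  have hηd : ∀ x ∈ Set.Icc 0 Λ, deriv η x ≤ 0 := by
    intro x hx
    rcases eq_or_lt_of_le hx.2 with hxΛ | hxΛ
    · rw [hxΛ, hηderivΛ]
    · apply deriv_nonpos_of_le_right (hηdiff x).hasDerivAt hxΛ
      intro t ht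
      exact le_of_lt (hW.eta_anti ⟨hx.1, hx.2⟩ ⟨le_trans hx.1 (le_of_lt ht.1), ht.2⟩ ht.1)
  -- surface boundary identity for ψ_x
  have hsurf : ∀ x, D1 F (x, η x) = -(deriv η x) * D2 F (x, η x) := by
    intro x
    have h1 : HasDerivAt (fun t : ℝ => ((t, η t) : ℝ × ℝ)) (1, deriv η x) x :=
      (hasDerivAt_id x).prodMk (hηdiff x).hasDerivAt
    have hB : HasDerivAt (fun t => F (t, η t)) (fderiv ℝ F (x, η x) (1, deriv η x)) x :=
      by have hd := ((hF.differentiable (by simp) : Differentiable ℝ F) (x, η x)).hasFDerivAt; exact hd.comp_hasDerivAt x h1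
    have hconst : (fun t => F (t, η t)) = fun _ => (1 : ℝ) :=
      funext fun t => hsol.surface_val t
    rw [hconst] at hB
    have h0 : fderiv ℝ F (x, η x) (1, deriv η x) = 0 :=
      ((hasDerivAt_const x (1:ℝ)).unique hB).symm
    have hsplit : ((1:ℝ), deriv η x) = ((1:ℝ), (0:ℝ)) + (deriv η x) • ((0:ℝ), (1:ℝ)) := by
      simp [Prod.ext_iff]
    rw [hsplit, map_add, map_smul] at h0
    have h2 : D1 F (x, η x) + deriv η x * D2 F (x, η x) = 0 := by
      simpa [D1, D2, smul_eq_mul] using h0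
    linarith
  -- ψ_y is nonnegative on the surface
  have hpy_surf : ∀ x, 0 ≤ D2 F (x, η x) := by
    intro x
    have hcont : Continuous (fun y => D2 F (x, y)) :=
      hDF2.continuous.comp (continuous_const.prodMk continuous_id)
    have hten : Filter.Tendsto (fun y => D2 F (x, y))
        (nhdsWithin (η x) (Set.Iio (η x))) (nhds (D2 F (x, η x))) :=
      (hcont.tendsto (η x)).mono_left nhdsWithin_le_nhds
    refine ge_of_tendsto hten ?_
    filter_upwards [Ioo_mem_nhdsLT_of_mem
      (⟨hsol.eta_pos x, le_refl (η x)⟩ : η x ∈ Set.Ioc 0 (η x))] with y hy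
    have h1 := hu x y hy.1 hy.2
    rw [py_eq hF] at h1
    exact le_of_lt h1
  -- the compact set and its open interior piece
  set K : Set (ℝ × ℝ) := {p | p.1 ∈ Set.Icc 0 Λ ∧ p.2 ∈ Set.Icc 0 (η p.1)} with hKdef
  set Uo : Set (ℝ × ℝ) := {p | 0 < p.1 ∧ p.1 < Λ ∧ 0 < p.2 ∧ p.2 < η p.1} with hUdef
  have hKclosed : IsClosed K := by
    have he : K = ({p : ℝ × ℝ | 0 ≤ p.1} ∩ {p | p.1 ≤ Λ}) ∩
        ({p | 0 ≤ p.2} ∩ {p | p.2 ≤ η p.1}) := by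
      ext p
      simp only [hKdef, Set.mem_setOf_eq, Set.mem_Icc, Set.mem_inter_iff] <;> tauto
    rw [he]
    exact ((isClosed_le continuous_const continuous_fst).inter
        (isClosed_le continuous_fst continuous_const)).inter
      ((isClosed_le continuous_const continuous_snd).inter
        (isClosed_le continuous_snd (hη.continuous.comp continuous_fst)))
  obtain ⟨xM, hxM, hM⟩ := isCompact_Icc.exists_isMaxOn
    (⟨0, le_refl 0, le_of_lt hΛ⟩ : (Set.Icc (0:ℝ) Λ).Nonempty) hη.continuous.continuousOn
  have hsub : K ⊆ Set.Icc ((0:ℝ), (0:ℝ)) (Λ, η xM) := by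
    rintro p ⟨hx, hy⟩
    exact Set.mem_Icc.2 ⟨Prod.le_def.2 ⟨hx.1, hy.1⟩, Prod.le_def.2 ⟨hx.2, le_trans hy.2 (hM hx)⟩⟩
  have hKcomp : IsCompact K := isCompact_Icc.of_isClosed_subset hKclosed hsub
  have hUopen : IsOpen Uo := by
    have he : Uo = ({p : ℝ × ℝ | 0 < p.1} ∩ {p | p.1 < Λ}) ∩
        ({p | 0 < p.2} ∩ {p | p.2 < η p.1}) := by
      ext p
      simp only [hUdef, Set.mem_setOf_eq, Set.mem_inter_iff] <;> tauto
    rw [he]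
    exact ((isOpen_lt continuous_const continuous_fst).inter
        (isOpen_lt continuous_fst continuous_const)).inter
      ((isOpen_lt continuous_const continuous_snd).inter
        (isOpen_lt continuous_snd (hη.continuous.comp continuous_fst)))
  have hUK : Uo ⊆ K := by
    rintro p ⟨h1, h2, h3, h4⟩
    exact ⟨⟨le_of_lt h1, le_of_lt h2⟩, le_of_lt h3, le_of_lt h4⟩
  -- ψ_x is harmonic in the fluid domain
  have comm1 : D2 (D1 F) = D1 (D2 F) := funext fun p => (D1_D2_comm hF p).symm
  have comm2 : D2 (D1 (D2 F)) = D1 (D2 (D2 F)) := funext fun p => (D1_D2_comm hDF2 p).symm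
  have hlap : ∀ p ∈ Uo, D1 (D1 (D1 F)) p + D2 (D2 (D1 F)) p = 0 := by
    intro p hpU
    have hGev : (fun q => D1 (D1 F) q + D2 (D2 F) q) =ᶠ[nhds p] (fun _ => γ) := by
      filter_upwards [hUopen.mem_nhds hpU] with q hq
      have h1 := hsol.laplace q.1 q.2 hq.2.2.1 hq.2.2.2
      rw [pxx_eq hF, pyy_eq hF] at h1
      exact h1
    have hfd : fderiv ℝ (fun q => D1 (D1 F) q + D2 (D2 F) q) p = 0 := by
      rw [hGev.fderiv_eq]; exact fderiv_const_apply γ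
    have hAd : HasFDerivAt (D1 (D1 F)) (fderiv ℝ (D1 (D1 F)) p) p :=
      (((ContDiffTop.d1 hDF1).differentiable (by simp)) p).hasFDerivAt
    have hBd : HasFDerivAt (D2 (D2 F)) (fderiv ℝ (D2 (D2 F)) p) p :=
      (((ContDiffTop.d2 hDF2).differentiable (by simp)) p).hasFDerivAt
    have hGd : HasFDerivAt (fun q => D1 (D1 F) q + D2 (D2 F) q)
        (fderiv ℝ (D1 (D1 F)) p + fderiv ℝ (D2 (D2 F)) p) p := hAd.add hBd
    have e1 : fderiv ℝ (D1 (D1 F)) p + fderiv ℝ (D2 (D2 F)) p = 0 := by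
      rw [← hGd.fderiv]; exact hfd
    have e2 : D1 (D1 (D1 F)) p + D1 (D2 (D2 F)) p = 0 := by
      have := congrArg (fun L : ℝ × ℝ →L[ℝ] ℝ => L (1, 0)) e1
      simpa [D1] using this
    rw [comm1, comm2]
    exact e2
  -- boundary nonnegativity of ψ_x
  have hbd : ∀ p ∈ K \ Uo, 0 ≤ D1 F p := by
    rintro p ⟨⟨hx, hy⟩, hpU⟩
    by_cases h1 : p.1 = 0
    · have e := px_eq hF p.1 p.2
      rw [h1, hpx0 p.2] at e
      show (0:ℝ) ≤ D1 F (p.1, p.2)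
      rw [h1, ← e]
    · by_cases h2 : p.1 = Λ
      · have e := px_eq hF p.1 p.2
        rw [h2, hpxΛ p.2] at e
        show (0:ℝ) ≤ D1 F (p.1, p.2)
        rw [h2, ← e]
      · by_cases h3 : p.2 = η p.1
        · show (0:ℝ) ≤ D1 F (p.1, p.2)
          rw [h3, hsurf p.1]
          exact mul_nonneg (neg_nonneg.2 (hηd p.1 hx)) (hpy_surf p.1)
        · by_cases h4 : p.2 = 0
          · have e := px_eq hF p.1 p.2
            have e2 : px ψ p.1 p.2 = 0 := by
              rw [h4, px]
              have : (fun t => ψ t 0) = fun _ => (0:ℝ) := funext fun t => hsol.bottom_val t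
              rw [this, deriv_const]
            show (0:ℝ) ≤ D1 F (p.1, p.2)
            rw [← e, e2]
          · exfalso
            exact hpU ⟨lt_of_le_of_ne hx.1 (Ne.symm h1), lt_of_le_of_ne hx.2 h2,
              lt_of_le_of_ne hy.1 (Ne.symm h4), lt_of_le_of_ne hy.2 h3⟩
  have hwK : ∀ p ∈ K, 0 ≤ D1 F p :=
    weak_min_principle hDF1 hKcomp hUopen hUK hlap hbd
  -- second x-derivative is nonpositive on the trough line
  have hpxx : ∀ y, 0 < y → y < η Λ → pxx ψ Λ y ≤ 0 := by
    intro y hy1 hy2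
    rw [pxx_eq hF]
    apply deriv_nonpos_of_min_left (hasDerivAt_sec1 hDF1 Λ y) hΛ
    intro t ht
    have hηt : η Λ < η t := hW.eta_anti ⟨ht.1, le_of_lt ht.2⟩ ⟨le_of_lt hΛ, le_refl Λ⟩ ht.2
    have htK : ((t, y) : ℝ × ℝ) ∈ K :=
      ⟨⟨ht.1, le_of_lt ht.2⟩, le_of_lt hy1, le_of_lt (lt_trans hy2 hηt)⟩
    have h0 : D1 F (Λ, y) = 0 := by rw [← px_eq hF, hpxΛ]
    show D1 F (Λ, y) ≤ D1 F (t, y)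
    rw [h0]
    exact hwK (t, y) htK
  have hpyy : ∀ y, 0 < y → y < η Λ → γ ≤ D2 (D2 F) (Λ, y) := by
    intro y hy1 hy2
    have h1 := hsol.laplace Λ y hy1 hy2
    have h2 := hpxx y hy1 hy2
    rw [pxx_eq hF, pyy_eq hF] at h1
    rw [pxx_eq hF] at h2
    linarith
  -- the trough vertical line
  set q : ℝ := η Λ with hqdef
  have hq0 : 0 < q := hsol.eta_pos Λ
  set u : ℝ → ℝ := fun t => D2 F (Λ, t) with hudef
  have hud : ∀ t, HasDerivAt u (D2 (D2 F) (Λ, t)) t := fun t => hasDerivAt_sec2 hDF2 Λ t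
  have hucont : Continuous u :=
    hDF2.continuous.comp (continuous_const.prodMk continuous_id)
  have humono : ∀ y ∈ Set.Icc 0 q, u y ≤ u q - γ * (q - y) := by
    have hmono : MonotoneOn (fun t => u t - γ * t) (Set.Icc 0 q) := by
      apply monotoneOn_of_deriv_nonneg (convex_Icc 0 q)
        ((hucont.sub (continuous_const.mul continuous_id)).continuousOn)
      · intro t ht
        exact (((hud t).sub ((hasDerivAt_id t).const_mul γ)).differentiableAt).differentiableWithinAt
      · intro t ht
        rw [interior_Icc] at ht
        have hd := ((hud t).sub ((hasDerivAt_id t).const_mul γ)).deriv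
        rw [show (u - (fun _ => γ) * id) = (u - fun y => γ * id y) from rfl, hd]
        have := hpyy t ht.1 ht.2
        simp only [mul_one]
        linarith
    intro y hy
    have := hmono hy ⟨le_of_lt hq0, le_refl q⟩ hy.2
    simp only at this
    linarith
  -- the mass of the trough line is 1
  have hFTC : ∫ y in (0:ℝ)..q, u y = 1 := by
    have hd : ∀ t ∈ Set.uIcc (0:ℝ) q, HasDerivAt (fun s => F (Λ, s)) (u t) t :=
      fun t _ => hasDerivAt_sec2 hF Λ t
    rw [intervalIntegral.integral_eq_sub_of_hasDerivAt hd (hucont.intervalIntegrable 0 q)]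
    show ψ Λ (η Λ) - ψ Λ 0 = 1
    rw [hsol.surface_val, hsol.bottom_val]
    ring
  have hint2 : ∫ y in (0:ℝ)..q, (u q - γ * q + γ * y) = (u q - γ * q) * q + γ * (q ^ 2 / 2) := by
    have i1 : IntervalIntegrable (fun _ : ℝ => u q - γ * q) MeasureTheory.volume 0 q :=
      intervalIntegrable_const
    have i2 : IntervalIntegrable (fun y : ℝ => γ * y) MeasureTheory.volume 0 q :=
      (continuous_const.mul continuous_id).intervalIntegrable 0 q
    rw [intervalIntegral.integral_add i1 i2, intervalIntegral.integral_const,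
      intervalIntegral.integral_const_mul, integral_id]
    simp
    ring
  have hkey : (1:ℝ) ≤ u q * q - γ * q ^ 2 / 2 := by
    have j1 : IntervalIntegrable u MeasureTheory.volume 0 q := hucont.intervalIntegrable 0 q
    have j2 : IntervalIntegrable (fun y : ℝ => u q - γ * q + γ * y) MeasureTheory.volume 0 q :=
      ((continuous_const.add (continuous_const.mul continuous_id)) :
        Continuous fun y : ℝ => u q - γ * q + γ * y).intervalIntegrable 0 q
    have hmono := intervalIntegral.integral_mono_on (le_of_lt hq0) j1 j2
      (fun y hy => by have := humono y hy; linarith)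
    rw [hFTC, hint2] at hmono
    nlinarith [hmono]
  -- Bernoulli at the trough
  have hbern := hsol.bernoulli Λ
  rw [hpxΛ (η Λ)] at hbern
  have hpyq : py ψ Λ (η Λ) = u q := py_eq hF Λ (η Λ)
  rw [hpyq] at hbern
  -- algebra: compare with the laminar flow of depth q
  have hSq : (aFun γ q + γ * q) * q = 1 + γ * q ^ 2 / 2 := by
    rw [aFun]; field_simp; ring
  have hstS : aFun γ q + γ * q ≤ u q := by
    have h1 : (aFun γ q + γ * q) * q ≤ u q * q := by
      rw [hSq]; nlinarith [hkey]
    exact le_of_mul_le_mul_right h1 hq0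
  have hS_pos : 0 < aFun γ q + γ * q := by
    have he : aFun γ q + γ * q = 1 / q + γ * q / 2 := by rw [aFun]; ring
    rw [he]; positivity
  have hr_ge : bernR γ (aFun γ q) ≤ r := by
    rw [bernR_aFun hγ hq0]
    have h2 : (aFun γ q + γ * q) ^ 2 ≤ (u q) ^ 2 := by nlinarith
    nlinarith [hbern]
  have hg0 : gFun γ sc = 0 := hcrit.2
  constructor
  · by_contra hcon
    push_neg at hcon
    have hd_pos := lamDepth_pos hγ sbar
    have h1 : sbar ≤ aFun γ q := by
      rcases eq_or_lt_of_le hcon with he | hlt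
      · rw [he, aFun_lamDepth hγ sbar]
      · have h2 := aFun_strictAnti hγ (Set.mem_Ioi.2 hq0)
          (Set.mem_Ioi.2 hd_pos) hlt
        rw [aFun_lamDepth hγ sbar] at h2
        exact le_of_lt h2
    have h2 : bernR γ sbar ≤ bernR γ (aFun γ q) :=
      (bernR_strictMonoOn hγ hg0).monotoneOn (Set.mem_Ici.2 (le_of_lt hsbar1))
        (Set.mem_Ici.2 (le_trans (le_of_lt hsbar1) h1)) h1
    rw [hsbar2] at h2
    linarith
  · by_contra hcon
    push_neg at hcon
    have hd_pos := lamDepth_pos hγ 0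
    have h1 : aFun γ q ≤ 0 := by
      rcases eq_or_lt_of_le hcon with he | hlt
      · rw [← he, aFun_lamDepth hγ 0]
      · have h2 := aFun_strictAnti hγ (Set.mem_Ioi.2 hd_pos)
          (Set.mem_Ioi.2 hq0) hlt
        rw [aFun_lamDepth hγ 0] at h2
        exact le_of_lt h2
    have h2 : bernR γ 0 ≤ bernR γ (aFun γ q) :=
      (bernR_strictAntiOn hγ).antitoneOn (Set.mem_Iic.2 h1) (Set.mem_Iic.2 (le_refl 0)) h1
    linarith
end
end

section
/- There exist absolute constants C > 0 and γ₀ > 0 such that for every γ > γ₀ and every unidirectional Stokes wave solution (ψ, η, r) with R(s_c) < r < R(0), the depth at the trough satisfies |η̌ − √(2/γ)| ≤ C·γ⁻². -/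
noncomputable section

open Real Set

namespace TDAux

open Filter Topology

lemma deriv_fst {G : ℝ × ℝ → ℝ} (hG : Differentiable ℝ G) (x y : ℝ) :
    deriv (fun t => G (t, y)) x = fderiv ℝ G (x, y) (1, 0) :=
  ((hG (x, y)).hasFDerivAt.comp_hasDerivAt x
    ((hasDerivAt_id x).prodMk (hasDerivAt_const x y))).deriv

lemma deriv_snd {G : ℝ × ℝ → ℝ} (hG : Differentiable ℝ G) (x y : ℝ) :
    deriv (fun t => G (x, t)) y = fderiv ℝ G (x, y) (0, 1) :=
  ((hG (x, y)).hasFDerivAt.comp_hasDerivAt y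
    ((hasDerivAt_const y x).prodMk (hasDerivAt_id y))).deriv

lemma fderiv_apply_contDiff {G : ℝ × ℝ → ℝ} (hG : ContDiff ℝ (⊤:ℕ∞) G) (v : ℝ × ℝ) :
    ContDiff ℝ (⊤:ℕ∞) (fun p => fderiv ℝ G p v) :=
  (hG.fderiv_right (by simp)).clm_apply contDiff_const

lemma fderiv_swap {G : ℝ × ℝ → ℝ} (hG : ContDiff ℝ (⊤:ℕ∞) G) (p a b : ℝ × ℝ) :
    fderiv ℝ (fun q => fderiv ℝ G q a) p b = fderiv ℝ (fun q => fderiv ℝ G q b) p a := by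
  have hd : Differentiable ℝ (fderiv ℝ G) :=
    (hG.fderiv_right (m := (⊤:ℕ∞)) (by simp)).differentiable (by simp)
  have hsymm := second_derivative_symmetric (f := G) (f' := fderiv ℝ G)
    (f'' := fderiv ℝ (fderiv ℝ G) p)
    (fun y => (hG.differentiable (by simp) y).hasFDerivAt) (hd p).hasFDerivAt
  have key : ∀ v w : ℝ × ℝ, fderiv ℝ (fun q => fderiv ℝ G q v) p w
      = fderiv ℝ (fderiv ℝ G) p w v := by
    intro v w
    have h := (hd p).hasFDerivAt.clm_apply (hasFDerivAt_const v p)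
    simp only [ContinuousLinearMap.comp_zero, zero_add] at h
    rw [h.fderiv]; rfl
  rw [key, key, hsymm]

/-- `ψ_x` is harmonic where `Δψ` is constant. -/
lemma harmonic_deriv {Ψ : ℝ × ℝ → ℝ} (hΨ : ContDiff ℝ (⊤:ℕ∞) Ψ) {U : Set (ℝ × ℝ)}
    (hU : IsOpen U) (γ : ℝ)
    (hlap : ∀ p ∈ U, fderiv ℝ (fun q => fderiv ℝ Ψ q ((1:ℝ), (0:ℝ))) p (1, 0)
      + fderiv ℝ (fun q => fderiv ℝ Ψ q ((0:ℝ), (1:ℝ))) p (0, 1) = γ)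
    {p : ℝ × ℝ} (hp : p ∈ U) :
    fderiv ℝ (fun q => fderiv ℝ (fun q' => fderiv ℝ Ψ q' ((1:ℝ), (0:ℝ))) q (1, 0)) p (1, 0)
    + fderiv ℝ (fun q => fderiv ℝ (fun q' => fderiv ℝ Ψ q' ((1:ℝ), (0:ℝ))) q (0, 1)) p (0, 1)
      = 0 := by
  set W : ℝ × ℝ → ℝ := fun q => fderiv ℝ Ψ q (1, 0) with hW
  set V : ℝ × ℝ → ℝ := fun q => fderiv ℝ Ψ q (0, 1) with hV
  have hWs : ContDiff ℝ (⊤:ℕ∞) W := fderiv_apply_contDiff hΨ _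
  have hVs : ContDiff ℝ (⊤:ℕ∞) V := fderiv_apply_contDiff hΨ _
  have h2 : (fun q => fderiv ℝ W q ((0:ℝ), (1:ℝ))) = fun q => fderiv ℝ V q (1, 0) := by
    funext q; exact fderiv_swap hΨ q _ _
  have hT2 : fderiv ℝ (fun q => fderiv ℝ W q ((0:ℝ), (1:ℝ))) p (0, 1)
      = fderiv ℝ (fun q => fderiv ℝ V q ((0:ℝ), (1:ℝ))) p (1, 0) := by
    rw [h2]; exact fderiv_swap hVs p _ _
  rw [hT2]
  set A : ℝ × ℝ → ℝ := fun q => fderiv ℝ W q (1, 0) with hA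
  set C : ℝ × ℝ → ℝ := fun q => fderiv ℝ V q (0, 1) with hC
  have hAd : DifferentiableAt ℝ A p :=
    (fderiv_apply_contDiff hWs _).differentiable (by simp) p
  have hCd : DifferentiableAt ℝ C p :=
    (fderiv_apply_contDiff hVs _).differentiable (by simp) p
  have hadd : fderiv ℝ (fun q => A q + C q) p = fderiv ℝ A p + fderiv ℝ C p :=
    fderiv_add hAd hCd
  have hev : (fun q => A q + C q) =ᶠ[𝓝 p] (fun _ => γ) := by
    filter_upwards [hU.mem_nhds hp] with q hq
    exact hlap q hq
  have hz : fderiv ℝ (fun q => A q + C q) p = 0 := by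
    rw [hev.fderiv_eq]; exact fderiv_const_apply γ
  have := congrArg (fun L : (ℝ × ℝ) →L[ℝ] ℝ => L (1, 0)) (hadd.symm.trans hz)
  simpa using this

lemma deriv_reflect {f : ℝ → ℝ} (hf : Differentiable ℝ f) (c : ℝ)
    (h : ∀ x, f x = f (c - x)) (x : ℝ) : deriv f x = - deriv f (c - x) := by
  have hg : HasDerivAt (fun t => f (c - t)) (deriv f (c - x) * (-1)) x :=
    (hf (c - x)).hasDerivAt.comp x (((hasDerivAt_id x).const_sub c))
  have h2 : deriv f x = deriv (fun t => f (c - t)) x := by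
    congr 1; ext t; exact h t
  rw [h2, hg.deriv]; ring

lemma deriv_zero_of_reflect {f : ℝ → ℝ} (hf : Differentiable ℝ f) (c : ℝ)
    (h : ∀ x, f x = f (c - x)) : deriv f (c / 2) = 0 := by
  have h1 := deriv_reflect hf c h (c / 2)
  have h2 : c - c / 2 = c / 2 := by ring
  rw [h2] at h1; linarith

lemma second_deriv_nonneg_of_isLocalMin {f : ℝ → ℝ} (hf : ContDiff ℝ (⊤:ℕ∞) f) {a : ℝ}
    (h : IsLocalMin f a) : 0 ≤ deriv (deriv f) a := by
  by_contra hneg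
  push_neg at hneg
  have hf' : ContDiff ℝ (⊤:ℕ∞) (deriv f) := (contDiff_infty_iff_deriv.mp hf).2
  have hcont : Continuous (deriv (deriv f)) :=
    (contDiff_infty_iff_deriv.mp hf').2.continuous
  obtain ⟨δ, hδ, hball⟩ := Metric.eventually_nhds_iff.mp
    (hcont.continuousAt.eventually_lt continuousAt_const hneg)
  have hd0 : deriv f a = 0 := h.deriv_eq_zero
  have hanti : StrictAntiOn (deriv f) (Icc a (a + δ/2)) := by
    apply strictAntiOn_of_deriv_neg (convex_Icc _ _) (hf'.continuous.continuousOn)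
    intro x hx
    rw [interior_Icc] at hx
    apply hball
    rw [Real.dist_eq, abs_lt]
    constructor <;> [linarith [hx.1]; linarith [hx.2, hδ]]
  have hfanti : StrictAntiOn f (Icc a (a + δ/2)) := by
    apply strictAntiOn_of_deriv_neg (convex_Icc _ _) (hf.continuous.continuousOn)
    intro x hx
    rw [interior_Icc] at hx
    have := hanti (left_mem_Icc.mpr (by linarith)) ⟨hx.1.le, hx.2.le⟩ hx.1
    rw [hd0] at this; exact this
  have hev : ∀ᶠ x in 𝓝[>] a, f a ≤ f x := nhdsWithin_le_nhds h
  have hev2 : ∀ᶠ x in 𝓝[>] a, x ∈ Ioo a (a + δ/2) :=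
    Ioo_mem_nhdsGT_of_mem ⟨le_refl a, by linarith⟩
  obtain ⟨x, hx1, hx2⟩ := (hev.and hev2).exists
  have : f x < f a := hfanti (left_mem_Icc.mpr (by linarith)) ⟨hx2.1.le, hx2.2.le⟩ hx2.1
  linarith

/-- Elementary maximum principle on the curved half-period rectangle. -/
lemma max_principle {G : ℝ × ℝ → ℝ} (hG : ContDiff ℝ (⊤:ℕ∞) G) {η : ℝ → ℝ}
    (hη : Continuous η) {Λ : ℝ} (hΛ : 0 < Λ) (hmax : ∀ x ∈ Icc (0:ℝ) Λ, η x ≤ η 0)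
    (harm : ∀ p : ℝ × ℝ, 0 < p.1 → p.1 < Λ → 0 < p.2 → p.2 < η p.1 →
      fderiv ℝ (fun q => fderiv ℝ G q ((1:ℝ), (0:ℝ))) p (1, 0)
        + fderiv ℝ (fun q => fderiv ℝ G q ((0:ℝ), (1:ℝ))) p (0, 1) = 0)
    (hb : ∀ p : ℝ × ℝ, p.1 ∈ Icc (0:ℝ) Λ → p.2 ∈ Icc 0 (η p.1) →
      (p.1 = 0 ∨ p.1 = Λ ∨ p.2 = 0 ∨ p.2 = η p.1) → 0 ≤ G p) :
    ∀ p : ℝ × ℝ, p.1 ∈ Icc (0:ℝ) Λ → p.2 ∈ Icc 0 (η p.1) → 0 ≤ G p := by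
  intro p hp1 hp2
  set K : Set (ℝ × ℝ) := {q | q.1 ∈ Icc (0:ℝ) Λ ∧ q.2 ∈ Icc 0 (η q.1)} with hKdef
  have hKcl : IsClosed K := by
    have h1 : IsClosed {q : ℝ × ℝ | 0 ≤ q.1} := isClosed_le continuous_const continuous_fst
    have h2 : IsClosed {q : ℝ × ℝ | q.1 ≤ Λ} := isClosed_le continuous_fst continuous_const
    have h3 : IsClosed {q : ℝ × ℝ | 0 ≤ q.2} := isClosed_le continuous_const continuous_snd
    have h4 : IsClosed {q : ℝ × ℝ | q.2 ≤ η q.1} :=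
      isClosed_le continuous_snd (hη.comp continuous_fst)
    have : K = ({q : ℝ × ℝ | 0 ≤ q.1} ∩ {q | q.1 ≤ Λ}) ∩
        ({q : ℝ × ℝ | 0 ≤ q.2} ∩ {q | q.2 ≤ η q.1}) := by
      ext q; simp only [hKdef, mem_setOf_eq, mem_Icc, mem_inter_iff]
    rw [this]; exact (h1.inter h2).inter (h3.inter h4)
  have hK : IsCompact K := by
    apply IsCompact.of_isClosed_subset (isCompact_Icc (a := ((0:ℝ), (0:ℝ))) (b := (Λ, η 0)))
      hKcl
    intro q hq
    rcases hq with ⟨hq1, hq2⟩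
    exact ⟨⟨hq1.1, hq2.1⟩, ⟨hq1.2, hq2.2.trans (hmax q.1 hq1)⟩⟩
  suffices hsuf : ∀ ε > (0:ℝ), -ε ≤ G p by
    by_contra hneg
    push_neg at hneg
    have := hsuf (-(G p) / 2) (by linarith)
    linarith
  intro ε hε
  set c : ℝ := ε / Λ ^ 2 with hc
  have hcpos : 0 < c := div_pos hε (by positivity)
  set v : ℝ × ℝ → ℝ := fun q => G q - c * q.1 ^ 2 with hv
  have hvsm : ContDiff ℝ (⊤:ℕ∞) v :=
    hG.sub (contDiff_const.mul ((contDiff_fst (E := ℝ) (F := ℝ)).pow 2))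
  obtain ⟨q, hqK, hq⟩ := hK.exists_isMinOn ⟨p, hp1, hp2⟩ hvsm.continuous.continuousOn
  have hqlb : -ε ≤ v q := by
    by_cases hΩ : 0 < q.1 ∧ q.1 < Λ ∧ 0 < q.2 ∧ q.2 < η q.1
    · exfalso
      obtain ⟨o1, o2, o3, o4⟩ := hΩ
      set Ω : Set (ℝ × ℝ) := {z | 0 < z.1 ∧ z.1 < Λ ∧ 0 < z.2 ∧ z.2 < η z.1} with hΩdef
      have hΩopen : IsOpen Ω := by
        have h1 : IsOpen {z : ℝ × ℝ | 0 < z.1} := isOpen_lt continuous_const continuous_fst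
        have h2 : IsOpen {z : ℝ × ℝ | z.1 < Λ} := isOpen_lt continuous_fst continuous_const
        have h3 : IsOpen {z : ℝ × ℝ | 0 < z.2} := isOpen_lt continuous_const continuous_snd
        have h4 : IsOpen {z : ℝ × ℝ | z.2 < η z.1} :=
          isOpen_lt continuous_snd (hη.comp continuous_fst)
        have : Ω = ({z : ℝ × ℝ | 0 < z.1} ∩ {z | z.1 < Λ}) ∩
            ({z : ℝ × ℝ | 0 < z.2} ∩ {z | z.2 < η z.1}) := by
          ext z; simp only [hΩdef, mem_setOf_eq, mem_inter_iff]; tauto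
        rw [this]; exact (h1.inter h2).inter (h3.inter h4)
      have hΩK : Ω ⊆ K := fun z hz =>
        ⟨⟨hz.1.le, hz.2.1.le⟩, ⟨hz.2.2.1.le, hz.2.2.2.le⟩⟩
      have hlm : IsLocalMin v q :=
        Filter.eventually_of_mem (hΩopen.mem_nhds ⟨o1, o2, o3, o4⟩)
          (fun z hz => hq (hΩK hz))
      have hgx : Continuous (fun t : ℝ => ((t, q.2) : ℝ × ℝ)) :=
        continuous_id.prodMk continuous_const
      have hlmx : IsLocalMin (fun t => v (t, q.2)) q.1 := by
        have h' : Filter.Tendsto (fun t : ℝ => ((t, q.2) : ℝ × ℝ)) (𝓝 q.1) (𝓝 q) :=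
          hgx.continuousAt (x := q.1)
        exact h'.eventually hlm
      have hgy : Continuous (fun s : ℝ => ((q.1, s) : ℝ × ℝ)) :=
        continuous_const.prodMk continuous_id
      have hlmy : IsLocalMin (fun s => v (q.1, s)) q.2 := by
        have h' : Filter.Tendsto (fun s : ℝ => ((q.1, s) : ℝ × ℝ)) (𝓝 q.2) (𝓝 q) :=
          hgy.continuousAt (x := q.2)
        exact h'.eventually hlm
      have hslx : ContDiff ℝ (⊤:ℕ∞) (fun t => v (t, q.2)) :=
        hvsm.comp (contDiff_id.prodMk contDiff_const)
      have hsly : ContDiff ℝ (⊤:ℕ∞) (fun s => v (q.1, s)) :=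
        hvsm.comp (contDiff_const.prodMk contDiff_id)
      have k1 := second_deriv_nonneg_of_isLocalMin hslx hlmx
      have k2 := second_deriv_nonneg_of_isLocalMin hsly hlmy
      have hGd : Differentiable ℝ G := hG.differentiable (by simp)
      have hF1 : ContDiff ℝ (⊤:ℕ∞) (fun z : ℝ × ℝ => fderiv ℝ G z ((1:ℝ), (0:ℝ))) :=
        fderiv_apply_contDiff hG _
      have hF2 : ContDiff ℝ (⊤:ℕ∞) (fun z : ℝ × ℝ => fderiv ℝ G z ((0:ℝ), (1:ℝ))) :=
        fderiv_apply_contDiff hG _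
      have e1 : deriv (fun t => v (t, q.2)) = fun t =>
          fderiv ℝ G (t, q.2) ((1:ℝ), (0:ℝ)) - c * (2 * t) := by
        funext t
        have hd1 : DifferentiableAt ℝ (fun t' => G (t', q.2)) t :=
          (hGd.comp (differentiable_id.prodMk (differentiable_const _))) t
        have hd2 : DifferentiableAt ℝ (fun t' : ℝ => c * t' ^ 2) t := by
          fun_prop
        have h3 : (fun t' => v (t', q.2)) = fun t' => G (t', q.2) - c * t' ^ 2 := rfl
        rw [h3, deriv_fun_sub hd1 hd2, deriv_fst hGd t q.2, deriv_const_mul _ (by fun_prop)]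
        simp [deriv_pow]
      have e1' : deriv (deriv (fun t => v (t, q.2))) q.1 =
          fderiv ℝ (fun z : ℝ × ℝ => fderiv ℝ G z ((1:ℝ), (0:ℝ))) q (1, 0) - 2 * c := by
        rw [e1]
        have hd1 : DifferentiableAt ℝ
            (fun t => fderiv ℝ G (t, q.2) ((1:ℝ), (0:ℝ))) q.1 :=
          ((hF1.differentiable (by simp)).comp
            (differentiable_id.prodMk (differentiable_const _))) q.1
        rw [deriv_fun_sub hd1 (by fun_prop)]
        rw [deriv_fst (hF1.differentiable (by simp)) q.1 q.2]
        have h2t : deriv (fun t : ℝ => 2 * t) q.1 = 2 := by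
          simpa using ((hasDerivAt_id q.1).const_mul (2:ℝ)).deriv
        rw [deriv_const_mul _ (by fun_prop : DifferentiableAt ℝ (fun t : ℝ => 2 * t) q.1), h2t]
        ring
      have e2 : deriv (fun s => v (q.1, s)) = fun s =>
          fderiv ℝ G (q.1, s) ((0:ℝ), (1:ℝ)) := by
        funext s
        have h3 : (fun s' => v (q.1, s')) = fun s' => G (q.1, s') - c * q.1 ^ 2 := rfl
        rw [h3, deriv_sub_const, deriv_snd hGd q.1 s]
      have e2' : deriv (deriv (fun s => v (q.1, s))) q.2 =
          fderiv ℝ (fun z : ℝ × ℝ => fderiv ℝ G z ((0:ℝ), (1:ℝ))) q (0, 1) := by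
        rw [e2, deriv_snd (hF2.differentiable (by simp)) q.1 q.2]
      rw [e1'] at k1
      rw [e2'] at k2
      have hharm := harm q o1 o2 o3 o4
      linarith
    · have hbd : q.1 = 0 ∨ q.1 = Λ ∨ q.2 = 0 ∨ q.2 = η q.1 := by
        push_neg at hΩ
        rcases hqK with ⟨⟨ha, hb'⟩, ⟨hc', hd⟩⟩
        rcases ha.eq_or_lt with h | h
        · exact Or.inl h.symm
        rcases hb'.eq_or_lt with h2 | h2
        · exact Or.inr (Or.inl h2)
        rcases hc'.eq_or_lt with h3 | h3
        · exact Or.inr (Or.inr (Or.inl h3.symm))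
        exact Or.inr (Or.inr (Or.inr (le_antisymm hd (hΩ h h2 h3))))
      have h0 : 0 ≤ G q := hb q hqK.1 hqK.2 hbd
      have hq1 : q.1 ∈ Icc (0:ℝ) Λ := hqK.1
      have hsq : q.1 ^ 2 ≤ Λ ^ 2 := by nlinarith [hq1.1, hq1.2]
      have hcL : c * Λ ^ 2 = ε := by rw [hc, div_mul_cancel₀ _ (by positivity)]
      have hce : c * q.1 ^ 2 ≤ ε := by
        calc c * q.1 ^ 2 ≤ c * Λ ^ 2 := by nlinarith
        _ = ε := hcL
      simp only [hv]
      linarith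
  have h1 : v q ≤ v p := hq ⟨hp1, hp2⟩
  have h2 : 0 ≤ c * p.1 ^ 2 := by positivity
  have h3 : v p = G p - c * p.1 ^ 2 := rfl
  linarith

end TDAux

open Filter Topology

set_option maxHeartbeats 2000000 in
/-- Proposition 2.2, second part: `η̌ = √(2/γ) + O(γ⁻²)` for unidirectional Stokes waves
with `R(s_c) < r < R(0)`. -/
theorem trough_depth_asymptotics :
    ∃ C > (0 : ℝ), ∃ γ₀ > (0 : ℝ), ∀ γ > γ₀,
      ∀ (ψ : ℝ → ℝ → ℝ) (η : ℝ → ℝ) (r Λ sc : ℝ),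
        StokesWave γ ψ η r Λ → Unidirectional ψ η → IsCrit γ sc →
        bernR γ sc < r → r < bernR γ 0 →
        |η Λ - Real.sqrt (2 / γ)| ≤ C / γ ^ 2 := by
  refine ⟨8, by norm_num, 1, by norm_num, ?_⟩
  intro γ hγ ψ η r Λ sc hw huni _hcrit _hr1 hr2
  have hγ0 : (0:ℝ) < γ := lt_trans one_pos hγ
  obtain ⟨sol, hΛ, hper, hevenη, hpper, hpeven, hanti⟩ := hw
  set Ψ : ℝ × ℝ → ℝ := fun p => ψ p.1 p.2 with hΨdef
  have hΨ : ContDiff ℝ (⊤:ℕ∞) Ψ := sol.psi_smooth.of_le (by simp)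
  have hΨd : Differentiable ℝ Ψ := hΨ.differentiable (by simp)
  have hηs : ContDiff ℝ (⊤:ℕ∞) η := sol.eta_smooth.of_le (by simp)
  have hηd : Differentiable ℝ η := hηs.differentiable (by simp)
  set W : ℝ × ℝ → ℝ := fun q => fderiv ℝ Ψ q (1, 0) with hWdef
  set V : ℝ × ℝ → ℝ := fun q => fderiv ℝ Ψ q (0, 1) with hVdef
  have hWs : ContDiff ℝ (⊤:ℕ∞) W := TDAux.fderiv_apply_contDiff hΨ _
  have hVs : ContDiff ℝ (⊤:ℕ∞) V := TDAux.fderiv_apply_contDiff hΨ _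
  have hWd : Differentiable ℝ W := hWs.differentiable (by simp)
  have hVd : Differentiable ℝ V := hVs.differentiable (by simp)
  have hpx : ∀ x y, px ψ x y = W (x, y) := fun x y => TDAux.deriv_fst hΨd x y
  have hpy : ∀ x y, py ψ x y = V (x, y) := fun x y => TDAux.deriv_snd hΨd x y
  have hpxx : ∀ x y, pxx ψ x y = fderiv ℝ W (x, y) (1, 0) := by
    intro x y
    have h : (fun t => px ψ t y) = fun t => W (t, y) := funext fun t => hpx t y
    show deriv (fun t => px ψ t y) x = _
    rw [h]; exact TDAux.deriv_fst hWd x y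
  have hpyy : ∀ x y, pyy ψ x y = fderiv ℝ V (x, y) (0, 1) := by
    intro x y
    have h : (fun t => py ψ x t) = fun t => V (x, t) := funext fun t => hpy x t
    show deriv (fun t => py ψ x t) y = _
    rw [h]; exact TDAux.deriv_snd hVd x y
  -- reflection symmetry about Λ
  have hψrefl : ∀ x y, ψ x y = ψ (2*Λ - x) y := by
    intro x y
    have h1 : ψ (-x + 2*Λ) y = ψ (-x) y := hpper (-x) y
    rw [show 2*Λ - x = -x + 2*Λ by ring, h1, hpeven]
  have hηrefl : ∀ x, η x = η (2*Λ - x) := by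
    intro x
    have h1 : η (-x + 2*Λ) = η (-x) := hper (-x)
    rw [show 2*Λ - x = -x + 2*Λ by ring, h1, hevenη]
  -- oddness of W about Λ, vanishing at x = 0 and x = Λ
  have hWodd : ∀ x y, W (x, y) = - W (2*Λ - x, y) := by
    intro x y
    have hfd : Differentiable ℝ (fun t => Ψ (t, y)) :=
      hΨd.comp (differentiable_id.prodMk (differentiable_const y))
    have h := TDAux.deriv_reflect hfd (2*Λ) (fun t => hψrefl t y) x
    rw [TDAux.deriv_fst hΨd, TDAux.deriv_fst hΨd] at h
    exact h
  have hWΛ : ∀ y, W (Λ, y) = 0 := by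
    intro y
    have h := hWodd Λ y
    rw [show 2*Λ - Λ = Λ by ring] at h
    linarith
  have hW0 : ∀ y, W (0, y) = 0 := by
    intro y
    have hfd : Differentiable ℝ (fun t => Ψ (t, y)) :=
      hΨd.comp (differentiable_id.prodMk (differentiable_const y))
    have h := TDAux.deriv_zero_of_reflect hfd 0 (fun x => by
      show Ψ (x, y) = Ψ (0 - x, y)
      rw [zero_sub]; exact (hpeven x y).symm)
    rw [show (0:ℝ)/2 = 0 by norm_num] at h
    have e : W (0, y) = deriv (fun t => Ψ (t, y)) 0 := (TDAux.deriv_fst hΨd 0 y).symm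
    rw [e]
    exact h
  -- surface: py ≥ 0 there
  have hVsurf : ∀ x, 0 ≤ V (x, η x) := by
    intro x
    have hcont : Continuous (fun y => V (x, y)) :=
      hVs.continuous.comp (continuous_const.prodMk continuous_id)
    refine ge_of_tendsto (hcont.continuousAt.mono_left
      (nhdsWithin_le_nhds (s := Iio (η x)))) ?_
    filter_upwards [Ioo_mem_nhdsLT (sol.eta_pos x)] with y hy
    have h := huni x y hy.1 hy.2
    rw [hpy] at h
    exact h.le
  -- surface chain rule
  have hsurfeq : ∀ x, W (x, η x) + deriv η x * V (x, η x) = 0 := by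
    intro x
    have h1 : HasDerivAt (fun t => Ψ (t, η t)) (fderiv ℝ Ψ (x, η x) (1, deriv η x)) x :=
      (hΨd _).hasFDerivAt.comp_hasDerivAt x ((hasDerivAt_id x).prodMk (hηd x).hasDerivAt)
    have h2 : (fun t => Ψ (t, η t)) = fun _ => (1:ℝ) := funext fun t => sol.surface_val t
    rw [h2] at h1
    have h4 : fderiv ℝ Ψ (x, η x) (1, deriv η x) = 0 := h1.unique (hasDerivAt_const x 1)
    have h5 : ((1:ℝ), deriv η x) = ((1:ℝ),(0:ℝ)) + deriv η x • ((0:ℝ),(1:ℝ)) := by simp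
    rw [h5, map_add, map_smul] at h4
    simpa using h4
  -- η' ≤ 0 on [0, Λ]
  have hη'np : ∀ x ∈ Icc (0:ℝ) Λ, deriv η x ≤ 0 := by
    intro x hx
    rcases eq_or_lt_of_le hx.2 with heq | hlt
    · have h := TDAux.deriv_zero_of_reflect hηd (2*Λ) hηrefl
      rw [show 2*Λ/2 = Λ by ring] at h
      rw [heq, h]
    · have hd : HasDerivAt η (deriv η x) x := (hηd x).hasDerivAt
      have hs := hasDerivAt_iff_tendsto_slope.mp hd
      have hmono : 𝓝[>] x ≤ 𝓝[≠] x :=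
        nhdsWithin_mono x (fun z hz => Set.mem_compl_singleton_iff.mpr (ne_of_gt hz))
      refine le_of_tendsto (hs.mono_left hmono) ?_
      filter_upwards [Ioo_mem_nhdsGT hlt] with z hz
      have hzI : z ∈ Icc (0:ℝ) Λ := ⟨le_trans hx.1 hz.1.le, hz.2.le⟩
      have hlt2 : η z < η x := hanti hx hzI hz.1
      rw [slope_def_field]
      apply div_nonpos_of_nonpos_of_nonneg (by linarith) (by linarith [hz.1])
  -- monotonicity of η on [0,Λ]
  have hmax : ∀ x ∈ Icc (0:ℝ) Λ, η x ≤ η 0 := by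
    intro x hx
    rcases eq_or_lt_of_le hx.1 with h | h
    · rw [← h]
    · exact (hanti (left_mem_Icc.mpr hΛ.le) hx h).le
  have hmin : ∀ x ∈ Icc (0:ℝ) Λ, η Λ ≤ η x := by
    intro x hx
    rcases eq_or_lt_of_le hx.2 with h | h
    · rw [h]
    · exact (hanti hx (right_mem_Icc.mpr hΛ.le) h).le
  -- Laplace in fderiv form on the open fluid domain
  set D : Set (ℝ × ℝ) := {p | 0 < p.2} ∩ {p | p.2 < η p.1} with hDdef
  have hDopen : IsOpen D :=
    (isOpen_lt continuous_const continuous_snd).inter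
      (isOpen_lt continuous_snd (hηs.continuous.comp continuous_fst))
  have hlapF : ∀ p ∈ D, fderiv ℝ (fun q => fderiv ℝ Ψ q ((1:ℝ),(0:ℝ))) p (1,0)
      + fderiv ℝ (fun q => fderiv ℝ Ψ q ((0:ℝ),(1:ℝ))) p (0,1) = γ := by
    intro p hp
    have h := sol.laplace p.1 p.2 hp.1 hp.2
    rw [hpxx, hpyy] at h
    exact h
  have hharm := fun p hp => TDAux.harmonic_deriv hΨ hDopen γ hlapF (p := p) hp
  -- boundary nonnegativity for the maximum principle
  have hbW : ∀ p : ℝ × ℝ, p.1 ∈ Icc (0:ℝ) Λ → p.2 ∈ Icc 0 (η p.1) →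
      (p.1 = 0 ∨ p.1 = Λ ∨ p.2 = 0 ∨ p.2 = η p.1) → 0 ≤ W p := by
    rintro ⟨x, y⟩ hp1 hp2 (h | h | h | h)
    · simp only at h
      subst h
      exact le_of_eq (hW0 y).symm
    · simp only at h
      subst h
      exact le_of_eq (hWΛ y).symm
    · simp only at h
      subst h
      have h0 : W (x, 0) = 0 := by
        have e : W (x, 0) = deriv (fun t => Ψ (t, 0)) x := (TDAux.deriv_fst hΨd x 0).symm
        have hbv : (fun t => Ψ (t, 0)) = fun _ => (0:ℝ) := funext fun t => sol.bottom_val t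
        rw [e, hbv, deriv_const]
      exact le_of_eq h0.symm
    · simp only at h
      subst h
      have h1 := hsurfeq x
      have h2 := hη'np x hp1
      have h3 := hVsurf x
      nlinarith [mul_nonneg (neg_nonneg.mpr h2) h3]
  -- maximum principle: W ≥ 0 on the half-period
  have hWnn := TDAux.max_principle hWs hηs.continuous hΛ hmax
    (fun p h1 h2 h3 h4 => hharm p ⟨h3, h4⟩) hbW
  -- trough line: pxx ≤ 0
  set b : ℝ := η Λ with hbdef
  have hbpos : 0 < b := sol.eta_pos Λ
  have hpxxΛ : ∀ y, 0 < y → y < b → pxx ψ Λ y ≤ 0 := by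
    intro y hy1 hy2
    have hgd : Differentiable ℝ (fun t => W (t, y)) :=
      hWd.comp (differentiable_id.prodMk (differentiable_const _))
    have hgΛ : W (Λ, y) = 0 := hWΛ y
    have hgneg : ∀ z ∈ Ioo Λ (2*Λ), W (z, y) ≤ 0 := by
      intro z hz
      have h1 := hWodd z y
      have hx1 : (0:ℝ) ≤ 2*Λ - z := by linarith [hz.2]
      have hx2 : 2*Λ - z ≤ Λ := by linarith [hz.1]
      have h2 : 0 ≤ W (2*Λ - z, y) :=
        hWnn (2*Λ - z, y) ⟨hx1, hx2⟩
          ⟨hy1.le, le_trans hy2.le (hmin (2*Λ - z) ⟨hx1, hx2⟩)⟩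
      linarith
    have heq : pxx ψ Λ y = deriv (fun t => W (t, y)) Λ := by
      rw [hpxx]; exact (TDAux.deriv_fst hWd Λ y).symm
    rw [heq]
    have hd : HasDerivAt (fun t => W (t, y)) (deriv (fun t => W (t, y)) Λ) Λ :=
      (hgd Λ).hasDerivAt
    have hs := hasDerivAt_iff_tendsto_slope.mp hd
    have hmono : 𝓝[>] Λ ≤ 𝓝[≠] Λ :=
      nhdsWithin_mono Λ (fun z hz => Set.mem_compl_singleton_iff.mpr (ne_of_gt hz))
    refine le_of_tendsto (hs.mono_left hmono) ?_
    filter_upwards [Ioo_mem_nhdsGT (by linarith : Λ < 2*Λ)] with z hz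
    rw [slope_def_field]
    apply div_nonpos_of_nonpos_of_nonneg _ (by linarith [hz.1])
    rw [hgΛ]
    simpa using hgneg z hz
  -- vertical line analysis at the trough
  set u : ℝ → ℝ := fun t => ψ Λ t with hudef
  have hus : ContDiff ℝ (⊤:ℕ∞) u := hΨ.comp (contDiff_const.prodMk contDiff_id)
  have hu' : ContDiff ℝ (⊤:ℕ∞) (deriv u) := (contDiff_infty_iff_deriv.mp hus).2
  have hpyu : ∀ t, py ψ Λ t = deriv u t := fun t => rfl
  have hpyyu : ∀ t, pyy ψ Λ t = deriv (deriv u) t := by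
    intro t
    show deriv (fun s => py ψ Λ s) t = _
    have h : (fun s => py ψ Λ s) = deriv u := funext fun s => hpyu s
    rw [h]
  have hu'pos : ∀ t ∈ Ioo (0:ℝ) b, 0 < deriv u t := by
    intro t ht
    have h := huni Λ t ht.1 ht.2
    rwa [hpyu] at h
  have hu''ge : ∀ t ∈ Ioo (0:ℝ) b, γ ≤ deriv (deriv u) t := by
    intro t ht
    have hl := sol.laplace Λ t ht.1 ht.2
    have h2 := hpxxΛ t ht.1 ht.2
    rw [hpyyu] at hl
    linarith
  set φ : ℝ → ℝ := fun t => deriv u t - γ * t with hφdef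
  have hφmono : MonotoneOn φ (Icc 0 b) := by
    apply monotoneOn_of_deriv_nonneg (convex_Icc _ _)
    · exact ((hu'.continuous).sub (continuous_const.mul continuous_id)).continuousOn
    · exact ((hu'.differentiable (by simp)).sub (by fun_prop)).differentiableOn
    · intro t ht
      rw [interior_Icc] at ht
      have hd1 : deriv φ t = deriv (deriv u) t - γ := by
        have e : deriv φ t = deriv (deriv u) t - deriv (fun s => γ * s) t :=
          deriv_fun_sub ((hu'.differentiable (by simp)) t) (by fun_prop)
        have e2 : deriv (fun s : ℝ => γ * s) t = γ := by
          simpa using ((hasDerivAt_id t).const_mul γ).deriv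
        rw [e, e2]
      rw [hd1]
      have := hu''ge t ht
      linarith
  have hu'0 : 0 ≤ deriv u 0 := by
    refine ge_of_tendsto ((hu'.continuous.continuousAt).mono_left
      (nhdsWithin_le_nhds (s := Ioi (0:ℝ)))) ?_
    filter_upwards [Ioo_mem_nhdsGT hbpos] with t ht
    exact (hu'pos t ht).le
  have hlow : ∀ t ∈ Icc (0:ℝ) b, γ * t ≤ deriv u t := by
    intro t ht
    have h := hφmono (left_mem_Icc.mpr hbpos.le) ht ht.1
    have e1 : φ 0 = deriv u 0 - γ * 0 := rfl
    have e2 : φ t = deriv u t - γ * t := rfl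
    rw [e1, e2] at h
    linarith
  set s1 : ℝ := deriv u b with hs1def
  have hupp : ∀ t ∈ Icc (0:ℝ) b, deriv u t ≤ s1 - γ * (b - t) := by
    intro t ht
    have h := hφmono ht (right_mem_Icc.mpr hbpos.le) ht.2
    have e1 : φ b = s1 - γ * b := rfl
    have e2 : φ t = deriv u t - γ * t := rfl
    rw [e1, e2] at h
    linarith
  -- fundamental theorem of calculus
  have hFTC : ∫ t in (0:ℝ)..b, deriv u t = 1 := by
    rw [intervalIntegral.integral_deriv_eq_sub
      (fun t _ => (hus.differentiable (by simp)).differentiableAt)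
      (hu'.continuous.intervalIntegrable 0 b)]
    have h1 : u b = 1 := sol.surface_val Λ
    have h2 : u 0 = 0 := sol.bottom_val Λ
    rw [h1, h2]; ring
  have hint1 : γ * b^2/2 ≤ 1 := by
    have hmono2 := intervalIntegral.integral_mono_on (μ := MeasureTheory.volume) hbpos.le
      ((by fun_prop : Continuous (fun t : ℝ => γ * t)).intervalIntegrable 0 b)
      (hu'.continuous.intervalIntegrable 0 b) hlow
    have hcalc : ∫ t in (0:ℝ)..b, γ * t = γ * (b^2/2) := by
      rw [intervalIntegral.integral_const_mul, integral_id]; ring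
    rw [hcalc, hFTC] at hmono2
    linarith
  have hint2 : 1 ≤ s1 * b - γ * b^2/2 := by
    have hcint : Continuous (fun t : ℝ => s1 - γ * (b - t)) := by fun_prop
    have hmono2 := intervalIntegral.integral_mono_on (μ := MeasureTheory.volume) hbpos.le
      (hu'.continuous.intervalIntegrable 0 b)
      (hcint.intervalIntegrable 0 b) hupp
    have hcalc : ∫ t in (0:ℝ)..b, (s1 - γ * (b - t)) = s1 * b - γ * b^2/2 := by
      have he : (fun t : ℝ => s1 - γ * (b - t)) = fun t => (s1 - γ * b) + γ * t :=
        funext fun t => by ring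
      rw [he, intervalIntegral.integral_add (intervalIntegrable_const)
        ((by fun_prop : Continuous (fun t : ℝ => γ * t)).intervalIntegrable 0 b),
        intervalIntegral.integral_const, intervalIntegral.integral_const_mul, integral_id]
      simp
      ring
    rw [hFTC, hcalc] at hmono2
    exact hmono2
  -- Bernoulli at the trough
  have hbern := sol.bernoulli Λ
  have hpxΛ0 : px ψ Λ (η Λ) = 0 := by rw [hpx]; exact hWΛ (η Λ)
  have hpyb : py ψ Λ (η Λ) = s1 := rfl
  rw [hpxΛ0, hpyb] at hbern
  have hs1sq : s1^2 = 2*(r - b) := by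
    have : (0:ℝ)^2/2 = 0 := by norm_num
    rw [this] at hbern
    rw [← hbdef] at hbern
    linarith
  have hs1pos : 0 < s1 := by
    have := hlow b (right_mem_Icc.mpr hbpos.le)
    have h2 : 0 < γ * b := by positivity
    linarith
  -- value of bernR γ 0
  have hR0 : bernR γ 0 = γ + Real.sqrt (2/γ) := by
    have h2 : Real.sqrt (2/γ) * γ = Real.sqrt (2*γ) := by
      have h1 : Real.sqrt (2/γ) * γ = Real.sqrt (2/γ) * Real.sqrt (γ^2) := by
        rw [Real.sqrt_sq hγ0.le]
      rw [h1, ← Real.sqrt_mul (by positivity)]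
      congr 1
      field_simp
    unfold bernR lamDepth
    rw [show (0:ℝ)^2 + 2*γ = 2*γ by ring]
    rw [← h2]
    field_simp
    ring
  set S : ℝ := Real.sqrt (2/γ) with hSdef
  have hSpos : 0 < S := Real.sqrt_pos.mpr (by positivity)
  have hS2 : S^2 = 2/γ := Real.sq_sqrt (by positivity)
  have hb2 : b^2 ≤ 2/γ := by
    rw [le_div_iff₀ hγ0]; nlinarith [hint1]
  have htS : b ≤ S := by
    have h1 : b = Real.sqrt (b^2) := (Real.sqrt_sq hbpos.le).symm
    rw [h1, hSdef]
    exact Real.sqrt_le_sqrt hb2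
  have hr2' : r < γ + S := by rw [hR0] at hr2; exact hr2
  -- key inequality
  have hgS : γ/2 * S^2 = 1 := by rw [hS2]; field_simp
  have h1sq : (1 + γ*b^2/2)^2 ≤ s1^2 * b^2 := by
    have hab : 1 + γ*b^2/2 ≤ s1*b := by linarith [hint2]
    have hmm := mul_self_le_mul_self (by positivity : (0:ℝ) ≤ 1 + γ*b^2/2) hab
    nlinarith [hmm]
  have h2sq : s1^2 * b^2 ≤ 2*(γ + S - b)*b^2 := by
    have h : s1^2 ≤ 2*(γ + S - b) := by nlinarith [hs1sq, hr2']
    nlinarith [mul_le_mul_of_nonneg_right h (sq_nonneg b)]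
  have hid : γ/2 * ((S - b) * (S + b)) = 1 - γ*b^2/2 := by
    linear_combination hgS
  have hkey : (1 - γ*b^2/2)^2 ≤ 2*b^2*(S - b) := by nlinarith [h1sq, h2sq]
  have hfinal : S - b ≤ 8/γ^2 := by
    rcases le_or_gt (S - b) 0 with h | h
    · have h9 : (0:ℝ) < 8/γ^2 := by positivity
      linarith
    · have hkey2 : (γ/2 * ((S - b) * (S + b)))^2 ≤ 2*b^2*(S - b) := by
        rw [hid]; exact hkey
      have hSb2 : S^2 ≤ (S + b)^2 := by nlinarith [hbpos, hSpos]
      have h2b : 2*b^2 ≤ 2*(2/γ) := by linarith [hb2]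
      have hquad : γ/2*(S - b)^2 ≤ 2*(2/γ)*(S - b) := by
        calc γ/2*(S - b)^2 = (γ/2)^2*(S - b)^2*S^2 := by
              linear_combination (-(γ/2*(S - b)^2))*hgS
          _ ≤ (γ/2)^2*(S - b)^2*(S + b)^2 :=
              mul_le_mul_of_nonneg_left hSb2 (by positivity)
          _ = (γ/2*((S - b)*(S + b)))^2 := by ring
          _ ≤ 2*b^2*(S - b) := hkey2
          _ ≤ 2*(2/γ)*(S - b) := mul_le_mul_of_nonneg_right h2b h.le
      have hquad' : γ^2*(S - b)^2 ≤ 8*(S - b) := by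
        have hmul := mul_le_mul_of_nonneg_left hquad
          (le_of_lt (by positivity : (0:ℝ) < 2*γ))
        have e1 : 2*γ*(γ/2*(S - b)^2) = γ^2*(S - b)^2 := by ring
        have e2 : 2*γ*(2*(2/γ)*(S - b)) = 8*(S - b) := by
          field_simp
          ring
        rw [e1, e2] at hmul
        exact hmul
      rw [le_div_iff₀ (by positivity : (0:ℝ) < γ^2)]
      nlinarith [hquad', h]
  rw [abs_le]
  constructor
  · have h8 : (8:ℝ)/γ^2 = 8/γ^2 := rfl
    linarith [hfinal]
  · have : (0:ℝ) < 8/γ^2 := by positivity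
    linarith [htS]
end
end

section
/- Let γ > 0 and let (ψ, η, r) be a unidirectional Stokes wave solution with r ≥ γ and η̂ = max η < γ/4. Then the inequality ψ(x, y) < (ψ_x(x, y)² + ψ_y(x, y)²)/γ holds for all (x, y) ∈ D_η. -/
noncomputable section

open Real Set

section Toolkit

open Filter Topology

/-- The uncurried version of a function of two real variables. -/
def unc (F : ℝ → ℝ → ℝ) : ℝ × ℝ → ℝ := fun p => F p.1 p.2

variable {F : ℝ → ℝ → ℝ}

theorem hasDerivAt_slice_x (hF : ContDiff ℝ (⊤ : ℕ∞) (unc F)) (x y : ℝ) :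
    HasDerivAt (fun t => F t y) (fderiv ℝ (unc F) (x, y) (1, 0)) x := by
  have h1 : HasDerivAt (fun t : ℝ => (t, y)) ((1 : ℝ), (0 : ℝ)) x :=
    (hasDerivAt_id x).prodMk (hasDerivAt_const x y)
  exact ((hF.differentiable (by simp) (x, y)).hasFDerivAt.comp_hasDerivAt x h1)

theorem hasDerivAt_slice_y (hF : ContDiff ℝ (⊤ : ℕ∞) (unc F)) (x y : ℝ) :
    HasDerivAt (fun t => F x t) (fderiv ℝ (unc F) (x, y) (0, 1)) y := by
  have h1 : HasDerivAt (fun t : ℝ => (x, t)) ((0 : ℝ), (1 : ℝ)) y :=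
    (hasDerivAt_const y x).prodMk (hasDerivAt_id y)
  exact ((hF.differentiable (by simp) (x, y)).hasFDerivAt.comp_hasDerivAt y h1)

theorem px_eq_s11 (hF : ContDiff ℝ (⊤ : ℕ∞) (unc F)) (x y : ℝ) :
    px F x y = fderiv ℝ (unc F) (x, y) (1, 0) := (hasDerivAt_slice_x hF x y).deriv

theorem py_eq_s11 (hF : ContDiff ℝ (⊤ : ℕ∞) (unc F)) (x y : ℝ) :
    py F x y = fderiv ℝ (unc F) (x, y) (0, 1) := (hasDerivAt_slice_y hF x y).deriv

theorem hasDerivAt_slx (hF : ContDiff ℝ (⊤ : ℕ∞) (unc F)) (x y : ℝ) :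
    HasDerivAt (fun t => F t y) (px F x y) x := by
  rw [px_eq_s11 hF x y]; exact hasDerivAt_slice_x hF x y

theorem hasDerivAt_sly (hF : ContDiff ℝ (⊤ : ℕ∞) (unc F)) (x y : ℝ) :
    HasDerivAt (fun t => F x t) (py F x y) y := by
  rw [py_eq_s11 hF x y]; exact hasDerivAt_slice_y hF x y

theorem unc_px_eq (hF : ContDiff ℝ (⊤ : ℕ∞) (unc F)) :
    unc (px F) = fun p => fderiv ℝ (unc F) p (1, 0) := funext fun p => px_eq_s11 hF p.1 p.2

theorem unc_py_eq (hF : ContDiff ℝ (⊤ : ℕ∞) (unc F)) :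
    unc (py F) = fun p => fderiv ℝ (unc F) p (0, 1) := funext fun p => py_eq_s11 hF p.1 p.2

theorem contDiff_px (hF : ContDiff ℝ (⊤ : ℕ∞) (unc F)) : ContDiff ℝ (⊤ : ℕ∞) (unc (px F)) := by
  rw [unc_px_eq hF]; exact (hF.fderiv_right (by simp)).clm_apply contDiff_const

theorem contDiff_py (hF : ContDiff ℝ (⊤ : ℕ∞) (unc F)) : ContDiff ℝ (⊤ : ℕ∞) (unc (py F)) := by
  rw [unc_py_eq hF]; exact (hF.fderiv_right (by simp)).clm_apply contDiff_const

theorem fderiv_apply_const {c : ℝ × ℝ → (ℝ × ℝ) →L[ℝ] ℝ} {p v w : ℝ × ℝ}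
    (hc : DifferentiableAt ℝ c p) :
    fderiv ℝ (fun q => c q v) p w = fderiv ℝ c p w v := by
  have := fderiv_clm_apply (𝕜 := ℝ) hc (differentiableAt_const v)
  rw [show (fun q => c q v) = fun q => (c q) ((fun _ => v) q) from rfl, this]
  simp

theorem clairaut (hF : ContDiff ℝ (⊤ : ℕ∞) (unc F)) (x y : ℝ) :
    py (px F) x y = px (py F) x y := by
  set c := fderiv ℝ (unc F) with hc
  have hφ : ContDiff ℝ (⊤ : ℕ∞) c := hF.fderiv_right (by simp)
  have hd : DifferentiableAt ℝ c (x, y) := hφ.differentiable (by simp) (x, y)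
  have e1 : py (px F) x y = fderiv ℝ c (x, y) (0, 1) (1, 0) := by
    rw [py_eq_s11 (contDiff_px hF) x y, unc_px_eq hF]
    exact fderiv_apply_const hd
  have e2 : px (py F) x y = fderiv ℝ c (x, y) (1, 0) (0, 1) := by
    rw [px_eq_s11 (contDiff_py hF) x y, unc_py_eq hF]
    exact fderiv_apply_const hd
  rw [e1, e2]
  exact second_derivative_symmetric
    (fun z => (hF.differentiable (by simp) z).hasFDerivAt)
    hd.hasFDerivAt (0, 1) (1, 0)

theorem continuous_slice_y (hF : ContDiff ℝ (⊤ : ℕ∞) (unc F)) (x : ℝ) :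
    Continuous (fun s => F x s) := by
  have : (fun s => F x s) = (unc F) ∘ (fun s => (x, s)) := rfl
  rw [this]
  exact hF.continuous.comp (continuous_const.prodMk continuous_id)

theorem per_px {c : ℝ} (h : ∀ x y, F (x + c) y = F x y) :
    ∀ x y, px F (x + c) y = px F x y := by
  intro x y
  have h1 : px F (x + c) y = deriv (fun t => F (t + c) y) x := by
    rw [px]
    exact (deriv_comp_add_const (fun t => F t y) c x).symm
  rw [h1, px]
  congr 1
  funext t
  exact h t y

theorem per_py {c : ℝ} (h : ∀ x y, F (x + c) y = F x y) :
    ∀ x y, py F (x + c) y = py F x y := by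
  intro x y
  rw [py, py]
  congr 1
  funext t
  exact h x t

end Toolkit

section OneVar

open Filter Topology

theorem slope_eq' {f : ℝ → ℝ} {a y : ℝ} (h0 : f a = 0) : slope f a y = f y / (y - a) := by
  rw [slope_def_field, h0, sub_zero]

theorem deriv_nonneg_right {f : ℝ → ℝ} {a b t : ℝ} (hab : a < b)
    (hd : HasDerivAt f t a) (h0 : f a = 0) (hpos : ∀ y ∈ Ioo a b, 0 ≤ f y) :
    0 ≤ t := by
  have hs : Tendsto (slope f a) (𝓝[>] a) (𝓝 t) :=
    (hasDerivAt_iff_tendsto_slope.mp hd).mono_left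
      (nhdsWithin_mono a (fun z hz => ne_of_gt hz))
  refine ge_of_tendsto hs ?_
  filter_upwards [Ioo_mem_nhdsGT_of_mem ⟨le_refl a, hab⟩] with y hy
  rw [slope_eq' h0]
  exact div_nonneg (hpos y hy) (by linarith [hy.1])

theorem second_deriv_test_max {f f' : ℝ → ℝ} {a c : ℝ}
    (hd : ∀ t, HasDerivAt f (f' t) t) (hd' : HasDerivAt f' c a)
    (hmax : IsLocalMax f a) : c ≤ 0 := by
  by_contra hc
  push_neg at hc
  have h0 : f' a = 0 := by
    have := hmax.deriv_eq_zero
    rwa [(hd a).deriv] at this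
  have hs : Tendsto (slope f' a) (𝓝[>] a) (𝓝 c) :=
    (hasDerivAt_iff_tendsto_slope.mp hd').mono_left
      (nhdsWithin_mono a (fun z hz => ne_of_gt hz))
  have hev : ∀ᶠ y in 𝓝[>] a, 0 < f' y := by
    filter_upwards [hs.eventually (eventually_gt_nhds (half_lt_self hc)),
      self_mem_nhdsWithin] with y hy hy'
    rw [slope_eq' h0] at hy
    have h2 : c / 2 > 0 := half_pos hc
    rcases div_pos_iff.mp (lt_trans h2 hy) with ⟨h, _⟩ | ⟨_, h⟩
    · exact h
    · have : (0:ℝ) < y - a := sub_pos.mpr hy'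
      linarith
  rw [eventually_nhdsWithin_iff, Metric.eventually_nhds_iff] at hev
  obtain ⟨ε, hε, hball⟩ := hev
  have hcont : Continuous f :=
    Differentiable.continuous (fun t => (hd t).differentiableAt)
  have hmono : StrictMonoOn f (Icc a (a + ε / 2)) := by
    apply strictMonoOn_of_deriv_pos (convex_Icc _ _) hcont.continuousOn
    intro t ht
    rw [interior_Icc] at ht
    rw [(hd t).deriv]
    refine hball ?_ ht.1
    rw [Real.dist_eq, abs_of_pos (by linarith [ht.1])]
    linarith [ht.2]
  obtain ⟨ε₂, hε₂, hloc⟩ := Metric.eventually_nhds_iff.mp hmax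
  set m := min (ε / 2) ε₂ / 2 with hm
  have hm0 : 0 < m := by positivity
  set y := a + m with hy
  have hya : a < y := by simp [hy]; linarith
  have h1 : f a < f y := by
    refine hmono ⟨le_refl a, by linarith⟩ ⟨le_of_lt hya, ?_⟩ hya
    have : m ≤ ε / 2 := by
      rw [hm]; have := min_le_left (ε/2) ε₂; linarith
    linarith
  have h2 : f y ≤ f a := by
    apply hloc
    rw [Real.dist_eq, show y - a = m by rw [hy]; ring, abs_of_pos hm0]
    have := min_le_right (ε/2) ε₂; rw [hm]; linarith
  linarith

/-- comparison on `[0, d]` from pointwise derivative comparison. -/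
theorem le_of_deriv_le {f g f' g' : ℝ → ℝ} {d : ℝ}
    (hf : ∀ t, HasDerivAt f (f' t) t) (hg : ∀ t, HasDerivAt g (g' t) t)
    (h0 : f 0 ≤ g 0) (hle : ∀ t ∈ Icc 0 d, f' t ≤ g' t) :
    ∀ t ∈ Icc (0:ℝ) d, f t ≤ g t := by
  intro t ht
  have hmono : MonotoneOn (fun s => g s - f s) (Icc 0 d) := by
    apply monotoneOn_of_deriv_nonneg (convex_Icc _ _)
    · exact (Continuous.sub (continuous_iff_continuousAt.mpr fun s => (hg s).continuousAt)
        (continuous_iff_continuousAt.mpr fun s => (hf s).continuousAt)).continuousOn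
    · intro s _
      exact ((hg s).sub (hf s)).differentiableAt.differentiableWithinAt
    · intro s hs
      rw [show deriv (fun s => g s - f s) s = g' s - f' s from ((hg s).sub (hf s)).deriv]
      rw [interior_Icc] at hs
      have := hle s ⟨le_of_lt hs.1, le_of_lt hs.2⟩
      linarith
  have h1 : (fun s => g s - f s) 0 ≤ (fun s => g s - f s) t :=
    hmono ⟨le_refl 0, ht.1.trans ht.2⟩ ht ht.1
  simp only at h1
  linarith

end OneVar

section Periodicity

/-- reduction of a real to the fundamental period cell `[0, c)`. -/
theorem periodic_reduce {c : ℝ} (hc : 0 < c) (x : ℝ) :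
    ∃ x₀, 0 ≤ x₀ ∧ x₀ < c ∧ ∀ (f : ℝ → ℝ), Function.Periodic f c → f x₀ = f x := by
  refine ⟨x - ⌊x / c⌋ * c, Int.sub_floor_div_mul_nonneg x hc, Int.sub_floor_div_mul_lt x hc,
    fun f hf => hf.sub_int_mul_eq ⌊x / c⌋⟩

theorem eta_max_min {η : ℝ → ℝ} {Λ : ℝ} (hΛ : 0 < Λ)
    (hper : ∀ x, η (x + 2 * Λ) = η x) (heven : ∀ x, η (-x) = η x)
    (hanti : StrictAntiOn η (Set.Icc 0 Λ)) :
    ∀ x, η Λ ≤ η x ∧ η x ≤ η 0 := by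
  have hperiodic : Function.Periodic η (2 * Λ) := fun x => hper x
  have key : ∀ x₀, 0 ≤ x₀ → x₀ < 2 * Λ → η Λ ≤ η x₀ ∧ η x₀ ≤ η 0 := by
    intro x₀ h0 h2
    rcases le_or_gt x₀ Λ with h | h
    · constructor
      · rcases eq_or_lt_of_le h with rfl | hlt
        · exact le_refl _
        · exact le_of_lt (hanti ⟨h0, h⟩ ⟨le_of_lt hΛ, le_refl Λ⟩ hlt)
      · rcases eq_or_lt_of_le h0 with rfl | hlt
        · exact le_refl _
        · exact le_of_lt (hanti ⟨le_refl 0, le_of_lt hΛ⟩ ⟨h0, h⟩ hlt)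
    · have he : η x₀ = η (2 * Λ - x₀) := by
        have h1 : η (x₀ - 2 * Λ) = η x₀ := by
          have := hperiodic (x₀ - 2 * Λ); simpa using this.symm
        rw [← h1, ← heven (x₀ - 2 * Λ)]; ring_nf
      have hm : 2 * Λ - x₀ ∈ Set.Icc (0:ℝ) Λ := ⟨by linarith, by linarith⟩
      constructor
      · rcases eq_or_lt_of_le hm.2 with he2 | hlt
        · rw [he, he2]
        · exact le_of_lt (by rw [he]; exact hanti hm ⟨le_of_lt hΛ, le_refl Λ⟩ hlt)
      · rcases eq_or_lt_of_le hm.1 with he2 | hlt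
        · rw [he, ← he2]
        · exact le_of_lt (by rw [he]; exact hanti ⟨le_refl 0, le_of_lt hΛ⟩ hm hlt)
  intro x
  obtain ⟨x₀, h0, h2, hval⟩ := periodic_reduce (by linarith : (0:ℝ) < 2 * Λ) x
  have := key x₀ h0 h2
  rw [hval η hperiodic] at this
  exact this

end Periodicity
section InteriorNoMax

open Filter Topology

set_option maxHeartbeats 2000000 in
theorem interior_no_max {γ ε δ : ℝ} {ψ : ℝ → ℝ → ℝ} {η : ℝ → ℝ} {a b : ℝ}
    (hγ : 0 < γ) (hε : 0 < ε)
    (hψ : ContDiff ℝ (⊤ : ℕ∞) (unc ψ))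
    (hηc : Continuous η)
    (hlap : ∀ x y, 0 < y → y < η x → pxx ψ x y + pyy ψ x y = γ)
    (hδ : 0 < δ) (hp1 : δ < b) (hp2 : b < η a)
    (hq : γ * (ε * Real.exp b) < (px ψ a b) ^ 2 + (py ψ a b) ^ 2)
    (hmax : ∀ z : ℝ × ℝ, δ ≤ z.2 → z.2 ≤ η z.1 →
      ψ z.1 z.2 - ((px ψ z.1 z.2) ^ 2 + (py ψ z.1 z.2) ^ 2) / γ + ε * Real.exp z.2 ≤
      ψ a b - ((px ψ a b) ^ 2 + (py ψ a b) ^ 2) / γ + ε * Real.exp b) :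
    False := by
  -- smoothness of iterated partial derivatives
  have h1x := contDiff_px hψ
  have h1y := contDiff_py hψ
  have h2xx := contDiff_px h1x
  have h2xy := contDiff_py h1x
  have h2yx := contDiff_px h1y
  have h2yy := contDiff_py h1y
  -- the open region
  have hO : IsOpen {z : ℝ × ℝ | δ < z.2 ∧ z.2 < η z.1} :=
    (isOpen_lt continuous_const continuous_snd).inter
      (isOpen_lt continuous_snd (hηc.comp continuous_fst))
  have hpO : (a, b) ∈ {z : ℝ × ℝ | δ < z.2 ∧ z.2 < η z.1} := ⟨hp1, hp2⟩
  -- local max of horizontal slice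
  have hlmx : IsLocalMax
      (fun t : ℝ => ψ t b - ((px ψ t b) ^ 2 + (py ψ t b) ^ 2) / γ + ε * Real.exp b) a := by
    have hc : Continuous (fun t : ℝ => (t, b)) := continuous_id.prodMk continuous_const
    filter_upwards [(hO.preimage hc).mem_nhds hpO] with t ht
    exact hmax (t, b) (le_of_lt ht.1) (le_of_lt ht.2)
  -- local max of vertical slice
  have hlmy : IsLocalMax
      (fun s : ℝ => ψ a s - ((px ψ a s) ^ 2 + (py ψ a s) ^ 2) / γ + ε * Real.exp s) b := by
    have hc : Continuous (fun s : ℝ => (a, s)) := continuous_const.prodMk continuous_id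
    filter_upwards [(hO.preimage hc).mem_nhds hpO] with s hs
    exact hmax (a, s) (le_of_lt hs.1) (le_of_lt hs.2)
  -- first derivative of the horizontal slice
  have fd : ∀ t, HasDerivAt
      (fun t : ℝ => ψ t b - ((px ψ t b) ^ 2 + (py ψ t b) ^ 2) / γ + ε * Real.exp b)
      (px ψ t b - (2 * px ψ t b * px (px ψ) t b + 2 * py ψ t b * px (py ψ) t b) / γ) t := by
    intro t
    have d1 : HasDerivAt (fun t => ψ t b) (px ψ t b) t := hasDerivAt_slx hψ t b
    have d2 : HasDerivAt (fun t => px ψ t b) (px (px ψ) t b) t := hasDerivAt_slx h1x t b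
    have d3 : HasDerivAt (fun t => py ψ t b) (px (py ψ) t b) t := hasDerivAt_slx h1y t b
    have d4 := (((d2.pow 2).add (d3.pow 2)).div_const γ)
    have d5 := (d1.sub d4).add_const (ε * Real.exp b)
    refine (d5).congr_deriv ?_
    try ring
  -- second derivative of the horizontal slice at a
  have fdd : HasDerivAt
      (fun t : ℝ => px ψ t b - (2 * px ψ t b * px (px ψ) t b + 2 * py ψ t b * px (py ψ) t b) / γ)
      (px (px ψ) a b - (2 * (px (px ψ) a b) ^ 2 + 2 * px ψ a b * px (px (px ψ)) a b
        + 2 * (px (py ψ) a b) ^ 2 + 2 * py ψ a b * px (px (py ψ)) a b) / γ) a := by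
    have d2 : HasDerivAt (fun t => px ψ t b) (px (px ψ) a b) a := hasDerivAt_slx h1x a b
    have d3 : HasDerivAt (fun t => py ψ t b) (px (py ψ) a b) a := hasDerivAt_slx h1y a b
    have d6 : HasDerivAt (fun t => px (px ψ) t b) (px (px (px ψ)) a b) a :=
      hasDerivAt_slx h2xx a b
    have d7 : HasDerivAt (fun t => px (py ψ) t b) (px (px (py ψ)) a b) a :=
      hasDerivAt_slx h2yx a b
    have d8 := hasDerivAt_slx h1x a b
    have d9 := (((d2.const_mul 2).mul d6).add ((d3.const_mul 2).mul d7))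
    have d10 : HasDerivAt
        (fun t => 2 * px ψ t b * px (px ψ) t b + 2 * py ψ t b * px (py ψ) t b)
        (2 * px (px ψ) a b * px (px ψ) a b + 2 * px ψ a b * px (px (px ψ)) a b
          + (2 * px (py ψ) a b * px (py ψ) a b + 2 * py ψ a b * px (px (py ψ)) a b)) a := by
      have e1 := ((d2.const_mul 2).mul d6)
      have e2 := ((d3.const_mul 2).mul d7)
      refine (e1.add e2).congr_deriv ?_
      try ring
    have d11 := (d8.sub (d10.div_const γ))
    refine (d11).congr_deriv ?_
    try ring
  -- first derivative of the vertical slice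
  have gd : ∀ s, HasDerivAt
      (fun s : ℝ => ψ a s - ((px ψ a s) ^ 2 + (py ψ a s) ^ 2) / γ + ε * Real.exp s)
      (py ψ a s - (2 * px ψ a s * py (px ψ) a s + 2 * py ψ a s * py (py ψ) a s) / γ
        + ε * Real.exp s) s := by
    intro s
    have d1 : HasDerivAt (fun s => ψ a s) (py ψ a s) s := hasDerivAt_sly hψ a s
    have d2 : HasDerivAt (fun s => px ψ a s) (py (px ψ) a s) s := hasDerivAt_sly h1x a s
    have d3 : HasDerivAt (fun s => py ψ a s) (py (py ψ) a s) s := hasDerivAt_sly h1y a s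
    have d4 := (((d2.pow 2).add (d3.pow 2)).div_const γ)
    have de : HasDerivAt (fun s : ℝ => ε * Real.exp s) (ε * Real.exp s) s :=
      (Real.hasDerivAt_exp s).const_mul ε
    have d5 := (d1.sub d4).add de
    refine (d5).congr_deriv ?_
    try ring
  -- second derivative of the vertical slice at b
  have gdd : HasDerivAt
      (fun s : ℝ => py ψ a s - (2 * px ψ a s * py (px ψ) a s + 2 * py ψ a s * py (py ψ) a s) / γ
        + ε * Real.exp s)
      (py (py ψ) a b - (2 * (py (px ψ) a b) ^ 2 + 2 * px ψ a b * py (py (px ψ)) a b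
        + 2 * (py (py ψ) a b) ^ 2 + 2 * py ψ a b * py (py (py ψ)) a b) / γ
        + ε * Real.exp b) b := by
    have d2 : HasDerivAt (fun s => px ψ a s) (py (px ψ) a b) b := hasDerivAt_sly h1x a b
    have d3 : HasDerivAt (fun s => py ψ a s) (py (py ψ) a b) b := hasDerivAt_sly h1y a b
    have d6 : HasDerivAt (fun s => py (px ψ) a s) (py (py (px ψ)) a b) b :=
      hasDerivAt_sly h2xy a b
    have d7 : HasDerivAt (fun s => py (py ψ) a s) (py (py (py ψ)) a b) b :=
      hasDerivAt_sly h2yy a b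
    have d10 : HasDerivAt
        (fun s => 2 * px ψ a s * py (px ψ) a s + 2 * py ψ a s * py (py ψ) a s)
        (2 * py (px ψ) a b * py (px ψ) a b + 2 * px ψ a b * py (py (px ψ)) a b
          + (2 * py (py ψ) a b * py (py ψ) a b + 2 * py ψ a b * py (py (py ψ)) a b)) b := by
      have e1 := ((d2.const_mul 2).mul d6)
      have e2 := ((d3.const_mul 2).mul d7)
      refine (e1.add e2).congr_deriv ?_
      try ring
    have de : HasDerivAt (fun s : ℝ => ε * Real.exp s) (ε * Real.exp b) b :=
      (Real.hasDerivAt_exp b).const_mul ε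
    have d11 := (d3.sub (d10.div_const γ)).add de
    refine (d11).congr_deriv ?_
    try ring
  -- vanishing first derivatives and sign of second derivatives
  have hfx0 : px ψ a b - (2 * px ψ a b * px (px ψ) a b + 2 * py ψ a b * px (py ψ) a b) / γ = 0 := by
    have := hlmx.deriv_eq_zero
    rwa [(fd a).deriv] at this
  have hgy0 : py ψ a b - (2 * px ψ a b * py (px ψ) a b + 2 * py ψ a b * py (py ψ) a b) / γ
      + ε * Real.exp b = 0 := by
    have := hlmy.deriv_eq_zero
    rwa [(gd b).deriv] at this
  have hsx : px (px ψ) a b - (2 * (px (px ψ) a b) ^ 2 + 2 * px ψ a b * px (px (px ψ)) a b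
      + 2 * (px (py ψ) a b) ^ 2 + 2 * py ψ a b * px (px (py ψ)) a b) / γ ≤ 0 :=
    second_deriv_test_max fd fdd hlmx
  have hsy : py (py ψ) a b - (2 * (py (px ψ) a b) ^ 2 + 2 * px ψ a b * py (py (px ψ)) a b
      + 2 * (py (py ψ) a b) ^ 2 + 2 * py ψ a b * py (py (py ψ)) a b) / γ
      + ε * Real.exp b ≤ 0 :=
    second_deriv_test_max gd gdd hlmy
  -- interior neighbourhood where the Laplace equation holds
  obtain ⟨ρ, hρ, hballs⟩ : ∃ ρ > 0, Metric.ball (a, b) ρ ⊆ {z : ℝ × ℝ | 0 < z.2 ∧ z.2 < η z.1} := by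
    have hO2 : IsOpen {z : ℝ × ℝ | 0 < z.2 ∧ z.2 < η z.1} :=
      (isOpen_lt continuous_const continuous_snd).inter
        (isOpen_lt continuous_snd (hηc.comp continuous_fst))
    have hmem : (a, b) ∈ {z : ℝ × ℝ | 0 < z.2 ∧ z.2 < η z.1} := ⟨lt_trans hδ hp1, hp2⟩
    exact Metric.isOpen_iff.mp hO2 _ hmem
  have hdistx : ∀ t : ℝ, dist t a < ρ → ((t, b) : ℝ × ℝ) ∈ Metric.ball (a, b) ρ := by
    intro t ht
    rw [Metric.mem_ball]
    have : dist ((t, b) : ℝ × ℝ) (a, b) = dist t a := by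
      rw [Prod.dist_eq, dist_self]
      exact max_eq_left dist_nonneg
    rwa [this]
  have hdisty : ∀ s : ℝ, dist s b < ρ → ((a, s) : ℝ × ℝ) ∈ Metric.ball (a, b) ρ := by
    intro s hs
    rw [Metric.mem_ball]
    have : dist ((a, s) : ℝ × ℝ) (a, b) = dist s b := by
      rw [Prod.dist_eq, dist_self]
      exact max_eq_right dist_nonneg
    rwa [this]
  -- horizontal local constancy of the Laplacian
  have hevx : (fun t => px (px ψ) t b + py (py ψ) t b) =ᶠ[nhds a] (fun _ => γ) := by
    filter_upwards [Metric.ball_mem_nhds a hρ] with t ht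
    have hm := hballs (hdistx t ht)
    exact hlap t b hm.1 hm.2
  have hevy : (fun s => px (px ψ) a s + py (py ψ) a s) =ᶠ[nhds b] (fun _ => γ) := by
    filter_upwards [Metric.ball_mem_nhds b hρ] with s hs
    have hm := hballs (hdisty s hs)
    exact hlap a s hm.1 hm.2
  -- harmonicity identities for the third derivatives
  have H1 : px (px (px ψ)) a b + px (py (py ψ)) a b = 0 := by
    have hd12 : HasDerivAt (fun t => px (px ψ) t b + py (py ψ) t b)
        (px (px (px ψ)) a b + px (py (py ψ)) a b) a :=
      (hasDerivAt_slx h2xx a b).add (hasDerivAt_slx h2yy a b)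
    have e1 := hd12.deriv
    rw [hevx.deriv_eq] at e1
    rw [deriv_const] at e1
    linarith [e1]
  have H2 : py (px (px ψ)) a b + py (py (py ψ)) a b = 0 := by
    have hd12 : HasDerivAt (fun s => px (px ψ) a s + py (py ψ) a s)
        (py (px (px ψ)) a b + py (py (py ψ)) a b) b :=
      (hasDerivAt_sly h2xx a b).add (hasDerivAt_sly h2yy a b)
    have e1 := hd12.deriv
    rw [hevy.deriv_eq] at e1
    rw [deriv_const] at e1
    linarith [e1]
  -- Clairaut identities
  have c0 : px (py ψ) a b = py (px ψ) a b := (clairaut hψ a b).symm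
  have c1 : px (py (py ψ)) a b = py (py (px ψ)) a b := by
    have einner : (fun s => py (px ψ) a s) = (fun s => px (py ψ) a s) := by
      funext s; exact clairaut hψ a s
    have e1 : py (py (px ψ)) a b = py (px (py ψ)) a b := by
      show deriv (fun s => py (px ψ) a s) b = deriv (fun s => px (py ψ) a s) b
      rw [einner]
    rw [e1]
    exact (clairaut h1y a b).symm
  have c2 : px (px (py ψ)) a b = py (px (px ψ)) a b := by
    have einner : (fun t => px (py ψ) t b) = (fun t => py (px ψ) t b) := by
      funext t; exact (clairaut hψ t b).symm
    have e1 : px (px (py ψ)) a b = px (py (px ψ)) a b := by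
      show deriv (fun t => px (py ψ) t b) a = deriv (fun t => py (px ψ) t b) a
      rw [einner]
    rw [e1]
    exact (clairaut h1x a b).symm
  -- the Laplace equation at the point itself
  have hlp : px (px ψ) a b + py (py ψ) a b = γ := hlap a b (lt_trans hδ hp1) hp2
  -- combined third-order cancellations
  have hXY : px (px (px ψ)) a b + py (py (px ψ)) a b = 0 := by rw [← c1]; exact H1
  have hZW : px (px (py ψ)) a b + py (py (py ψ)) a b = 0 := by rw [c2]; exact H2
  -- algebraic notation
  set A := px ψ a b with hA
  set B := py ψ a b with hB
  set aa := px (px ψ) a b with haa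
  set bb := py (px ψ) a b with hbb
  set cc := py (py ψ) a b with hcc
  set X := px (px (px ψ)) a b with hX
  set Y := py (py (px ψ)) a b with hY
  set Z := px (px (py ψ)) a b with hZ
  set W := py (py (py ψ)) a b with hW
  set E := ε * Real.exp b with hEdef
  rw [c0] at hfx0 hsx
  have hE : 0 < E := mul_pos hε (Real.exp_pos b)
  -- first-order conditions
  have eq1 : 2 * A * aa + 2 * B * bb = γ * A := by
    have h := sub_eq_zero.mp hfx0
    rw [eq_comm, div_eq_iff (ne_of_gt hγ)] at h
    linarith [h]
  have eq2 : 2 * A * bb + 2 * B * cc = γ * (B + E) := by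
    have h : (2 * A * bb + 2 * B * cc) / γ = B + E := by linarith [hgy0]
    rw [div_eq_iff (ne_of_gt hγ)] at h
    linarith [h]
  -- second-order conditions, multiplied out
  have hsx' : aa * γ ≤ 2 * aa ^ 2 + 2 * A * X + 2 * bb ^ 2 + 2 * B * Z :=
    (le_div_iff₀ hγ).mp (by linarith [hsx])
  have hsy' : (cc + E) * γ ≤ 2 * bb ^ 2 + 2 * A * Y + 2 * cc ^ 2 + 2 * B * W :=
    (le_div_iff₀ hγ).mp (by linarith [hsy])
  have hAXY : A * X + A * Y = 0 := by linear_combination A * hXY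
  have hBZW : B * Z + B * W = 0 := by linear_combination B * hZW
  have hlpγ : aa * γ + cc * γ = γ * γ := by linear_combination γ * hlp
  have e0 : γ * γ + γ * E = aa * γ + (cc + E) * γ := by linear_combination (-γ) * hlp
  have eT : (2 * aa ^ 2 + 2 * A * X + 2 * bb ^ 2 + 2 * B * Z)
      + (2 * bb ^ 2 + 2 * A * Y + 2 * cc ^ 2 + 2 * B * W)
      = 2 * aa ^ 2 + 4 * bb ^ 2 + 2 * cc ^ 2 := by
    linear_combination 2 * hAXY + 2 * hBZW
  have sum2 : γ * γ + γ * E ≤ 2 * aa ^ 2 + 4 * bb ^ 2 + 2 * cc ^ 2 := by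
    rw [e0, ← eT]
    exact add_le_add hsx' hsy'
  -- key quadratic identities
  have h5 : (aa - γ / 2) * A + bb * B = 0 := by linear_combination eq1 / 2
  have h6 : bb * A - (aa - γ / 2) * B = γ * E / 2 := by
    linear_combination eq2 / 2 - B * hlp
  have key : ((aa - γ / 2) ^ 2 + bb ^ 2) * (A ^ 2 + B ^ 2) = (γ * E / 2) ^ 2 := by
    have hid : ((aa - γ / 2) * A + bb * B) ^ 2 + (bb * A - (aa - γ / 2) * B) ^ 2
        = ((aa - γ / 2) ^ 2 + bb ^ 2) * (A ^ 2 + B ^ 2) := by ring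
    rw [h5, h6] at hid
    rw [← hid]
    ring
  have h7 : γ * E ≤ 4 * ((aa - γ / 2) ^ 2 + bb ^ 2) := by
    have e : cc = γ - aa := by linarith [hlp]
    rw [e] at sum2
    have e2' : 2 * aa ^ 2 + 4 * bb ^ 2 + 2 * (γ - aa) ^ 2
        = 4 * ((aa - γ / 2) ^ 2 + bb ^ 2) + γ * γ := by ring
    rw [e2'] at sum2
    linarith [sum2]
  -- final contradiction
  have hν : γ * E / 4 ≤ (aa - γ / 2) ^ 2 + bb ^ 2 := by linarith [h7]
  have hq2nn : (0:ℝ) ≤ A ^ 2 + B ^ 2 := by positivity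
  have s1 : (γ * E / 4) * (A ^ 2 + B ^ 2) ≤ ((aa - γ / 2) ^ 2 + bb ^ 2) * (A ^ 2 + B ^ 2) :=
    mul_le_mul_of_nonneg_right hν hq2nn
  have s2 : (γ * E / 4) * (A ^ 2 + B ^ 2) ≤ (γ * E / 2) ^ 2 := by rw [← key]; exact s1
  have s4 : (γ * E / 4) * (γ * E) < (γ * E / 4) * (A ^ 2 + B ^ 2) := by
    apply mul_lt_mul_of_pos_left hq
    positivity
  have e2 : (γ * E / 4) * (γ * E) = (γ * E / 2) ^ 2 := by ring
  linarith [s2, s4, e2]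

end InteriorNoMax
section Strip

theorem strip_estimate {γ C δ : ℝ} {ψ : ℝ → ℝ → ℝ} (hγ : 0 < γ)
    (hψ : ContDiff ℝ (⊤ : ℕ∞) (unc ψ))
    (hC : 0 < C) (hδC : C * δ ≤ 3 * γ / 16)
    (x : ℝ)
    (hB0 : 0 ≤ py ψ x 0)
    (hpyy0 : py (py ψ) x 0 = γ)
    (hψ0 : ψ x 0 = 0)
    (hCb : ∀ s, 0 ≤ s → s ≤ δ → |py (py (py ψ)) x s| ≤ C) :
    ∀ y, 0 ≤ y → y ≤ δ →
      γ * ψ x y + γ ^ 2 * y ^ 2 / 32 ≤ (px ψ x y) ^ 2 + (py ψ x y) ^ 2 := by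
  have h1y := contDiff_py hψ
  have h2yy := contDiff_py h1y
  set T := py ψ x 0 with hT
  -- step 1: bounds on pyy
  have step1a : ∀ s ∈ Set.Icc (0:ℝ) δ, γ - C * s ≤ py (py ψ) x s := by
    apply le_of_deriv_le (f' := fun _ => -C) (g' := fun s => py (py (py ψ)) x s)
    · intro t
      have h : HasDerivAt (fun s : ℝ => C * s) C t := by
        simpa using (hasDerivAt_id t).const_mul C
      simpa using h.const_sub γ
    · intro t; exact hasDerivAt_sly h2yy x t
    · simp [hpyy0]
    · intro t ht
      have := hCb t ht.1 ht.2
      have := neg_abs_le (py (py (py ψ)) x t)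
      linarith
  have step1b : ∀ s ∈ Set.Icc (0:ℝ) δ, py (py ψ) x s ≤ γ + C * s := by
    apply le_of_deriv_le (f' := fun s => py (py (py ψ)) x s) (g' := fun _ => C)
    · intro t; exact hasDerivAt_sly h2yy x t
    · intro t
      have h : HasDerivAt (fun s : ℝ => C * s) C t := by
        simpa using (hasDerivAt_id t).const_mul C
      simpa using h.const_add γ
    · simp [hpyy0]
    · intro t ht
      have := hCb t ht.1 ht.2
      have := le_abs_self (py (py (py ψ)) x t)
      linarith
  -- step 2: bounds on py
  have step2a : ∀ y ∈ Set.Icc (0:ℝ) δ, T + γ * y - C * y ^ 2 / 2 ≤ py ψ x y := by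
    apply le_of_deriv_le (f' := fun y => γ - C * y) (g' := fun y => py (py ψ) x y)
    · intro t
      have h1 : HasDerivAt (fun y : ℝ => T + γ * y) γ t := by
        simpa using ((hasDerivAt_id t).const_mul γ).const_add T
      have h2 : HasDerivAt (fun y : ℝ => C * y ^ 2 / 2) (C * t) t := by
        have := ((hasDerivAt_pow 2 t).const_mul C).div_const 2
        refine (this).congr_deriv ?_
        ring
      exact h1.sub h2
    · intro t; exact hasDerivAt_sly h1y x t
    · simp [hT]
    · exact step1a
  have step2b : ∀ y ∈ Set.Icc (0:ℝ) δ, py ψ x y ≤ T + γ * y + C * y ^ 2 / 2 := by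
    apply le_of_deriv_le (f' := fun y => py (py ψ) x y) (g' := fun y => γ + C * y)
    · intro t; exact hasDerivAt_sly h1y x t
    · intro t
      have h1 : HasDerivAt (fun y : ℝ => T + γ * y) γ t := by
        simpa using ((hasDerivAt_id t).const_mul γ).const_add T
      have h2 : HasDerivAt (fun y : ℝ => C * y ^ 2 / 2) (C * t) t := by
        have := ((hasDerivAt_pow 2 t).const_mul C).div_const 2
        refine (this).congr_deriv ?_
        ring
      exact h1.add h2
    · simp [hT]
    · exact step1b
  -- step 3: upper bound on psi
  have step3 : ∀ y ∈ Set.Icc (0:ℝ) δ,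
      ψ x y ≤ T * y + γ * y ^ 2 / 2 + C * y ^ 3 / 6 := by
    apply le_of_deriv_le (f' := fun y => py ψ x y)
        (g' := fun y => T + γ * y + C * y ^ 2 / 2)
    · intro t; exact hasDerivAt_sly hψ x t
    · intro t
      have h1 : HasDerivAt (fun y : ℝ => T * y) T t := by
        simpa using (hasDerivAt_id t).const_mul T
      have h2 : HasDerivAt (fun y : ℝ => γ * y ^ 2 / 2) (γ * t) t := by
        have := ((hasDerivAt_pow 2 t).const_mul γ).div_const 2
        refine (this).congr_deriv ?_
        ring
      have h3 : HasDerivAt (fun y : ℝ => C * y ^ 3 / 6) (C * t ^ 2 / 2) t := by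
        have := ((hasDerivAt_pow 3 t).const_mul C).div_const 6
        refine (this).congr_deriv ?_
        ring
      exact (h1.add h2).add h3
    · simp [hψ0]
    · exact step2b
  -- conclusion
  intro y hy0 hyδ
  have hmem : y ∈ Set.Icc (0:ℝ) δ := ⟨hy0, hyδ⟩
  have huy : C * y ≤ 3 * γ / 16 := by
    have := mul_le_mul_of_nonneg_left hyδ (le_of_lt hC)
    linarith
  have hBnn : 0 ≤ T + γ * y - C * y ^ 2 / 2 := by nlinarith [huy, hy0, hB0, hγ]
  have hpy2 : (T + γ * y - C * y ^ 2 / 2) ^ 2 ≤ (py ψ x y) ^ 2 :=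
    pow_le_pow_left₀ hBnn (step2a y hmem) 2
  have hψle := step3 y hmem
  have k1 : 0 ≤ T * y * (γ - C * y) :=
    mul_nonneg (mul_nonneg hB0 hy0) (by linarith)
  have k2 : C * y * (γ * y ^ 2) ≤ (3 * γ / 16) * (γ * y ^ 2) :=
    mul_le_mul_of_nonneg_right huy (by positivity)
  have hpx2 : (0:ℝ) ≤ (px ψ x y) ^ 2 := sq_nonneg _
  nlinarith [hpy2, hψle, k1, k2, sq_nonneg T, sq_nonneg (C * y ^ 2), sq_nonneg (γ * y), hpx2]

end Strip

section Main

open Filter Topology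

set_option maxHeartbeats 2000000 in
/-- Proposition 2.5: if `r ≥ γ` and `η̂ < γ/4`, then
`ψ < (ψ_x² + ψ_y²)/γ` everywhere in `D_η`. -/
theorem psi_kinetic_bound :
    ∀ γ > (0 : ℝ),
      ∀ (ψ : ℝ → ℝ → ℝ) (η : ℝ → ℝ) (r Λ : ℝ),
        StokesWave γ ψ η r Λ → Unidirectional ψ η →
        r ≥ γ → η 0 < γ / 4 →
        ∀ x y : ℝ, 0 < y → y < η x →
          ψ x y < ((px ψ x y) ^ 2 + (py ψ x y) ^ 2) / γ := by
  intro γ hγ ψ η r Λ hw huni hr hdepth x y hy hyη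
  obtain ⟨sol, hΛ, hper, heven, hψper, hψeven, hanti⟩ := hw
  obtain ⟨hηsm, hηpos, hψsm, hlap, hbern, hsurf, hbot⟩ := sol
  have hψ : ContDiff ℝ (⊤ : ℕ∞) (unc ψ) := hψsm
  have hηc : Continuous η := hηsm.continuous
  have hbounds : ∀ x, η Λ ≤ η x ∧ η x ≤ η 0 := eta_max_min hΛ hper heven hanti
  have h1x := contDiff_px hψ
  have h1y := contDiff_py hψ
  have h2xx := contDiff_px h1x
  have h2yy := contDiff_py h1y
  have h3yyy := contDiff_py h2yy
  -- ψ is positive in the fluid domain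
  have hψpos : ∀ a b, 0 < b → b < η a → 0 < ψ a b := by
    intro a b hb hbη
    have hmono : StrictMonoOn (fun s => ψ a s) (Set.Icc 0 (η a)) := by
      apply strictMonoOn_of_deriv_pos (convex_Icc _ _)
        (continuous_slice_y hψ a).continuousOn
      intro s hs
      rw [interior_Icc] at hs
      rw [(hasDerivAt_sly hψ a s).deriv]
      exact huni a s hs.1 hs.2
    have h0 : ψ a 0 < ψ a b :=
      hmono ⟨le_refl 0, le_of_lt (hηpos a)⟩ ⟨le_of_lt hb, le_of_lt hbη⟩ hb
    rwa [hbot a] at h0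
  -- the vertical velocity is nonnegative at the bottom
  have ht0 : ∀ a, 0 ≤ py ψ a 0 := by
    intro a
    exact deriv_nonneg_right (hηpos a) (hasDerivAt_sly hψ a 0) (hbot a)
      (fun s hs => le_of_lt (hψpos a s hs.1 hs.2))
  -- ψ_yy = γ at the bottom
  have hx0 : ∀ t, px ψ t 0 = 0 := by
    intro t
    have : (fun u => ψ u 0) = fun _ => (0:ℝ) := by funext u; exact hbot u
    rw [px, this]
    exact deriv_const t 0
  have hpxx0 : ∀ a, px (px ψ) a 0 = 0 := by
    intro a
    have : (fun t => px ψ t 0) = fun _ => (0:ℝ) := by funext t; exact hx0 t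
    rw [px, this]
    exact deriv_const a 0
  have hpyy0 : ∀ a, py (py ψ) a 0 = γ := by
    intro a
    set h : ℝ → ℝ := fun s => px (px ψ) a s + py (py ψ) a s with hh
    have hcont : Continuous h :=
      (continuous_slice_y h2xx a).add (continuous_slice_y h2yy a)
    have hlim1 : Tendsto h (nhdsWithin 0 (Set.Ioi 0)) (nhds (h 0)) :=
      (hcont.continuousAt).continuousWithinAt
    have hlim2 : Tendsto h (nhdsWithin 0 (Set.Ioi 0)) (nhds γ) := by
      apply Tendsto.congr' _ tendsto_const_nhds
      filter_upwards [Ioo_mem_nhdsGT_of_mem ⟨le_refl (0:ℝ), hηpos a⟩] with s hs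
      exact (hlap a s hs.1 hs.2).symm
    have heq : h 0 = γ := tendsto_nhds_unique hlim1 hlim2
    have : px (px ψ) a 0 + py (py ψ) a 0 = γ := heq
    rw [hpxx0 a] at this
    linarith
  -- uniform bound on ψ_yyy near the bottom
  set δ₀ := η Λ / 2 with hδ₀def
  have hδ₀pos : 0 < δ₀ := by
    have := hηpos Λ; rw [hδ₀def]; linarith
  have hK₀c : IsCompact (Set.Icc (0:ℝ) (2*Λ) ×ˢ Set.Icc (0:ℝ) δ₀) :=
    isCompact_Icc.prod isCompact_Icc
  obtain ⟨C₀, hC₀⟩ := hK₀c.exists_bound_of_continuousOn h3yyy.continuous.continuousOn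
  set C := max C₀ 1 with hCdef
  have hC : 0 < C := lt_of_lt_of_le one_pos (le_max_right _ _)
  have hper3 : ∀ a b, py (py (py ψ)) (a + 2*Λ) b = py (py (py ψ)) a b :=
    per_py (per_py (per_py (fun a b => hψper a b)))
  have hCb : ∀ a s, 0 ≤ s → s ≤ δ₀ → |py (py (py ψ)) a s| ≤ C := by
    intro a s h0 h1
    obtain ⟨x₀, hx₀0, hx₀2, hval⟩ := periodic_reduce (by linarith : (0:ℝ) < 2*Λ) a
    have hp : Function.Periodic (fun u => py (py (py ψ)) u s) (2*Λ) := fun u => hper3 u s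
    rw [← hval _ hp]
    have h2 := hC₀ (x₀, s) ⟨⟨hx₀0, le_of_lt hx₀2⟩, ⟨h0, h1⟩⟩
    rw [Real.norm_eq_abs] at h2
    calc |py (py (py ψ)) x₀ s| ≤ C₀ := h2
    _ ≤ C := le_max_left _ _
  -- choice of δ
  set δ := min δ₀ (3*γ/(16*C)) with hδdef
  have hδpos : 0 < δ := lt_min hδ₀pos (by positivity)
  have hδC : C * δ ≤ 3 * γ / 16 := by
    have h1 : δ ≤ 3*γ/(16*C) := min_le_right _ _
    have h2 := mul_le_mul_of_nonneg_left h1 (le_of_lt hC)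
    have hCne : C ≠ 0 := ne_of_gt hC
    have h3 : C * (3*γ/(16*C)) = 3*γ/16 := by
      field_simp
    linarith [h2, h3.ge, h3.le]
  have hδlt : ∀ a, δ < η a := by
    intro a
    have h1 : δ ≤ δ₀ := min_le_left _ _
    have h2 := (hbounds a).1
    have := hηpos Λ
    rw [hδ₀def] at h1
    linarith
  -- the strip estimate
  have hstrip : ∀ a b, 0 ≤ b → b ≤ δ →
      γ * ψ a b + γ ^ 2 * b ^ 2 / 32 ≤ (px ψ a b) ^ 2 + (py ψ a b) ^ 2 := by
    intro a
    exact strip_estimate hγ hψ hC hδC a (ht0 a) (hpyy0 a) (hbot a)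
      (fun s h0 h1 => hCb a s h0 (h1.trans (min_le_left _ _)))
  -- surface values
  have hsurfq : ∀ a, (px ψ a (η a)) ^ 2 + (py ψ a (η a)) ^ 2 = 2*(r - η a) := by
    intro a
    have := hbern a
    linarith
  have hsurfU : ∀ a, ψ a (η a) - ((px ψ a (η a)) ^ 2 + (py ψ a (η a)) ^ 2)/γ ≤ -(1/2) := by
    intro a
    have h1 : (3:ℝ)/2 * γ ≤ 2*(r - η a) := by
      have := (hbounds a).2
      linarith
    have h2 : (3:ℝ)/2 ≤ 2*(r - η a)/γ := by
      rw [le_div_iff₀ hγ]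
      linarith
    rw [hsurf a, hsurfq a]
    linarith
  -- the compact period cell above level δ
  set K : Set (ℝ × ℝ) := (Set.Icc (0:ℝ) (2*Λ) ×ˢ Set.Icc δ (η 0)) ∩ {z | z.2 ≤ η z.1}
    with hKdef
  have hKc : IsCompact K :=
    (isCompact_Icc.prod isCompact_Icc).inter_right
      (isClosed_le continuous_snd (hηc.comp continuous_fst))
  have hδη0 : δ < η 0 := hδlt 0
  have hKne : K.Nonempty := by
    refine ⟨(0, δ), ?_⟩
    simp only [hKdef, Set.mem_inter_iff, Set.mem_prod, Set.mem_Icc, Set.mem_setOf_eq]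
    exact ⟨⟨⟨le_refl 0, by linarith⟩, ⟨le_refl δ, le_of_lt hδη0⟩⟩, le_of_lt hδη0⟩
  -- continuity of the main quantities
  have hcontpx : Continuous (unc (px ψ)) := h1x.continuous
  have hcontpy : Continuous (unc (py ψ)) := h1y.continuous
  have hQcont : Continuous (fun z : ℝ × ℝ => (px ψ z.1 z.2) ^ 2 + (py ψ z.1 z.2) ^ 2) := by
    have : (fun z : ℝ × ℝ => (px ψ z.1 z.2) ^ 2 + (py ψ z.1 z.2) ^ 2)
        = fun z => (unc (px ψ) z) ^ 2 + (unc (py ψ) z) ^ 2 := rfl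
    rw [this]
    exact (hcontpx.pow 2).add (hcontpy.pow 2)
  -- minimum of the squared gradient on K
  obtain ⟨z₀, hz₀K, hz₀min⟩ := hKc.exists_isMinOn hKne hQcont.continuousOn
  set q₀ := (px ψ z₀.1 z₀.2) ^ 2 + (py ψ z₀.1 z₀.2) ^ 2 with hq₀def
  have hz₀K' : (z₀.1 ∈ Set.Icc (0:ℝ) (2*Λ) ∧ z₀.2 ∈ Set.Icc δ (η 0)) ∧ z₀.2 ≤ η z₀.1 := by
    have := hz₀K
    simp only [hKdef, Set.mem_inter_iff, Set.mem_prod, Set.mem_setOf_eq] at this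
    exact this
  have hq₀pos : 0 < q₀ := by
    have hz2δ : δ ≤ z₀.2 := hz₀K'.1.2.1
    have hz2η : z₀.2 ≤ η z₀.1 := hz₀K'.2
    rcases eq_or_lt_of_le hz2η with hq | hq
    · rw [hq₀def]
      have heq2 : (px ψ z₀.1 z₀.2) ^ 2 + (py ψ z₀.1 z₀.2) ^ 2 = 2*(r - η z₀.1) := by
        rw [hq]; exact hsurfq z₀.1
      rw [heq2]
      have := (hbounds z₀.1).2
      linarith
    · have hpy := huni z₀.1 z₀.2 (lt_of_lt_of_le hδpos hz2δ) hq
      rw [hq₀def]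
      positivity
  -- constants for the maximum principle
  set m := min (γ*δ^2/32) (1/2 : ℝ) with hmdef
  have hm : 0 < m := lt_min (by positivity) one_half_pos
  set ε := min (m/2) (q₀/(2*γ)) * Real.exp (-(η 0)) with hεdef
  have hε : 0 < ε := by
    apply mul_pos (lt_min (by positivity) (by positivity)) (Real.exp_pos _)
  have hεbound : ∀ s, s ≤ η 0 → ε * Real.exp s ≤ min (m/2) (q₀/(2*γ)) := by
    intro s hs
    have e1 : ε * Real.exp s = min (m/2) (q₀/(2*γ)) * Real.exp (s - η 0) := by
      rw [hεdef, mul_assoc, ← Real.exp_add]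
      congr 2
      ring
    rw [e1]
    have e2 : Real.exp (s - η 0) ≤ 1 := Real.exp_le_one_iff.mpr (by linarith)
    have := mul_le_mul_of_nonneg_left e2
      (le_of_lt (lt_min (by positivity : (0:ℝ) < m/2) (by positivity : (0:ℝ) < q₀/(2*γ))))
    simpa using this
  -- maximize V over K
  have hVcont : Continuous (fun z : ℝ × ℝ =>
      ψ z.1 z.2 - ((px ψ z.1 z.2) ^ 2 + (py ψ z.1 z.2) ^ 2)/γ + ε * Real.exp z.2) := by
    apply Continuous.add
    · exact (hψ.continuous).sub (hQcont.div_const γ)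
    · exact continuous_const.mul (Real.continuous_exp.comp continuous_snd)
  obtain ⟨p, hpK, hpmax⟩ := hKc.exists_isMaxOn hKne hVcont.continuousOn
  -- globalize the maximum by periodicity
  have hglob : ∀ z : ℝ × ℝ, δ ≤ z.2 → z.2 ≤ η z.1 →
      ψ z.1 z.2 - ((px ψ z.1 z.2) ^ 2 + (py ψ z.1 z.2) ^ 2)/γ + ε * Real.exp z.2 ≤
      ψ p.1 p.2 - ((px ψ p.1 p.2) ^ 2 + (py ψ p.1 p.2) ^ 2)/γ + ε * Real.exp p.2 := by
    intro z h1 h2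
    obtain ⟨x₀, hx₀0, hx₀2, hval⟩ := periodic_reduce (by linarith : (0:ℝ) < 2*Λ) z.1
    have e1 : ψ x₀ z.2 = ψ z.1 z.2 := hval (fun u => ψ u z.2) (fun u => hψper u z.2)
    have e2 : px ψ x₀ z.2 = px ψ z.1 z.2 :=
      hval (fun u => px ψ u z.2) (fun u => per_px (fun a b => hψper a b) u z.2)
    have e3 : py ψ x₀ z.2 = py ψ z.1 z.2 :=
      hval (fun u => py ψ u z.2) (fun u => per_py (fun a b => hψper a b) u z.2)
    have eη : η x₀ = η z.1 := hval η (fun u => hper u)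
    have hmem : ((x₀, z.2) : ℝ × ℝ) ∈ K := by
      refine ⟨⟨⟨hx₀0, le_of_lt hx₀2⟩, ⟨h1, h2.trans (hbounds z.1).2⟩⟩, ?_⟩
      show z.2 ≤ η x₀
      rw [eη]; exact h2
    have hle := (isMaxOn_iff.mp hpmax) _ hmem
    dsimp only at hle
    rw [e1, e2, e3] at hle
    exact hle
  -- the maximum point is on the boundary, giving a negative bound for V p
  have hVp : ψ p.1 p.2 - ((px ψ p.1 p.2) ^ 2 + (py ψ p.1 p.2) ^ 2)/γ + ε * Real.exp p.2
      ≤ -m/2 := by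
    have hpK' : (p.1 ∈ Set.Icc (0:ℝ) (2*Λ) ∧ p.2 ∈ Set.Icc δ (η 0)) ∧ p.2 ≤ η p.1 := by
      have := hpK
      simp only [hKdef, Set.mem_inter_iff, Set.mem_prod, Set.mem_setOf_eq] at this
      exact this
    have hp2δ : δ ≤ p.2 := hpK'.1.2.1
    have hp2η0 : p.2 ≤ η 0 := hpK'.1.2.2
    have hp2η : p.2 ≤ η p.1 := hpK'.2
    have hεp : ε * Real.exp p.2 ≤ m/2 :=
      le_trans (hεbound p.2 hp2η0) (min_le_left _ _)
    rcases eq_or_lt_of_le hp2η with hsur | hint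
    · -- surface case
      have hU : ψ p.1 p.2 - ((px ψ p.1 p.2) ^ 2 + (py ψ p.1 p.2) ^ 2)/γ ≤ -(1/2) := by
        have := hsurfU p.1
        rw [← hsur] at this
        exact this
      have hm2 : m ≤ 1/2 := min_le_right _ _
      linarith
    · rcases eq_or_lt_of_le hp2δ with hbotc | hintδ
      · -- bottom-strip case
        have hst := hstrip p.1 p.2 (le_of_lt (lt_of_lt_of_le hδpos hp2δ)) hbotc.ge
        have hU : ψ p.1 p.2 - ((px ψ p.1 p.2) ^ 2 + (py ψ p.1 p.2) ^ 2)/γ ≤ -(γ*p.2^2/32) := by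
          have hdiv := (div_le_div_iff_of_pos_right hγ).mpr hst
          have e : (γ * ψ p.1 p.2 + γ^2*p.2^2/32)/γ = ψ p.1 p.2 + γ*p.2^2/32 := by
            field_simp
          rw [e] at hdiv
          linarith
        have hm1 : m ≤ γ*δ^2/32 := min_le_left _ _
        have : γ*p.2^2/32 = γ*δ^2/32 := by rw [← hbotc]
        linarith
      · -- interior case: contradiction
        exfalso
        apply interior_no_max hγ hε hψ hηc hlap hδpos hintδ hint _ hglob
        have h1 : ε * Real.exp p.2 ≤ q₀/(2*γ) :=
          le_trans (hεbound p.2 hp2η0) (min_le_right _ _)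
        have h2 : γ * (ε * Real.exp p.2) ≤ q₀/2 := by
          have := mul_le_mul_of_nonneg_left h1 (le_of_lt hγ)
          have e : γ * (q₀/(2*γ)) = q₀/2 := by field_simp
          linarith
        have h3 : q₀ ≤ (px ψ p.1 p.2) ^ 2 + (py ψ p.1 p.2) ^ 2 := (isMinOn_iff.mp hz₀min) _ hpK
        linarith
  -- conclusion
  rcases le_or_gt y δ with hle | hgt
  · have hst := hstrip x y (le_of_lt hy) hle
    have hpos2 : 0 < γ ^ 2 * y ^ 2 / 32 := by positivity
    have hlt : γ * ψ x y < (px ψ x y) ^ 2 + (py ψ x y) ^ 2 := by linarith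
    rw [lt_div_iff₀ hγ]
    linarith
  · have h1 := hglob (x, y) (le_of_lt hgt) (le_of_lt hyη)
    dsimp only at h1
    have h2 : ψ x y - ((px ψ x y) ^ 2 + (py ψ x y) ^ 2)/γ < 0 := by
      have hep : 0 < ε * Real.exp y := mul_pos hε (Real.exp_pos y)
      linarith [h1, hVp, hm, hep]
    linarith [h2]

end Main
end
end
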